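/- arXiv:2009.10139 — 8 statements merged into one kernel-verified Lean document; each statement's English description precedes it below -/
import Mathlib

section
/- Let n ≥ 1, let G be a group, and let S be a totally symmetric subset of G with exactly n elements, each of which has finite order. Then G is infinite or |G| ≥ 2^{n−1} · n!. -/
/-- The braid relations on `m` generators indexed by `Fin m`
(generator `i` represents the standard generator `σ_{i+1}`). -/
def braidRels (m : ℕ) : Set (FreeGroup (Fin m)) :=
  {r | (∃ i j : Fin m, (i : ℕ) + 2 ≤ (j : ℕ) ∧
        r = FreeGroup.of i * FreeGroup.of j * (FreeGroup.of i)⁻¹ * (FreeGroup.of j)⁻¹) ∨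
       (∃ i j : Fin m, (j : ℕ) = (i : ℕ) + 1 ∧
        r = FreeGroup.of i * FreeGroup.of j * FreeGroup.of i *
            (FreeGroup.of j * FreeGroup.of i * FreeGroup.of j)⁻¹)}

/-- The braid group on `n` strands, presented with `n - 1` generators. -/
def BraidGroup (n : ℕ) : Type := PresentedGroup (braidRels (n - 1))

instance (n : ℕ) : Group (BraidGroup n) :=
  inferInstanceAs (Group (PresentedGroup (braidRels (n - 1))))

/-- The standard generator `σ_{i+1}` of the braid group `B_n`. -/
def braidGen {n : ℕ} (i : Fin (n - 1)) : BraidGroup n := PresentedGroup.of i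

/-- A subset of a group is totally symmetric if its elements pairwise commute and
every permutation of the set is realized by conjugation by some group element. -/
def IsTotallySymmetric {G : Type*} [Group G] (S : Set G) : Prop :=
  (∀ a ∈ S, ∀ b ∈ S, a * b = b * a) ∧
  ∀ π : S ≃ S, ∃ h : G, ∀ s : S, h * (s : G) * h⁻¹ = ((π s : S) : G)

set_option linter.unusedSectionVars false
set_option linter.unusedVariables false
section TotallySymmetricAux

variable {G : Type*} [Group G] {α : Type*} [DecidableEq α]
  (s : α → G) (hcomm : ∀ i j, Commute (s i) (s j))

private def prodOf (T : Finset α) : G :=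
  T.noncommProd s fun x _ y _ _ => hcomm x y

private lemma prodOf_commute (j : α) (T : Finset α) :
    Commute (s j) (prodOf s hcomm T) :=
  Finset.noncommProd_commute _ _ _ _ fun x _ => hcomm j x

private lemma prodOf_insert (a : α) (T : Finset α) (ha : a ∉ T) :
    prodOf s hcomm (insert a T) = s a * prodOf s hcomm T :=
  Finset.noncommProd_insert_of_notMem _ _ _ _ ha

private lemma prodOf_erase (a : α) (T : Finset α) (ha : a ∈ T) :
    prodOf s hcomm T = s a * prodOf s hcomm (T.erase a) :=
  (Finset.mul_noncommProd_erase T ha s _).symm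

private lemma conj_prodOf (g : G) (σ : α → α) (hσ : Function.Injective σ)
    (hh : ∀ j, g * s j * g⁻¹ = s (σ j)) (T : Finset α) :
    g * prodOf s hcomm T * g⁻¹ = prodOf s hcomm (T.image σ) := by
  induction T using Finset.cons_induction with
  | empty => simp [prodOf]; exact Finset.noncommProd_empty _ _
  | cons a T ha ih =>
    have hni : σ a ∉ T.image σ := by
      simp only [Finset.mem_image]
      rintro ⟨x, hx, hxa⟩
      exact ha (hσ hxa ▸ hx)
    rw [Finset.cons_eq_insert, Finset.image_insert,
      prodOf_insert s hcomm _ _ hni, prodOf_insert s hcomm _ _ ha, ← hh a, ← ih]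
    group

end TotallySymmetricAux

/-- If a group `G` has a totally symmetric subset with exactly `n ≥ 1` elements, each of
finite order, then `G` is infinite or `|G| ≥ 2^(n-1) * n!`. -/
theorem card_ge_of_totallySymmetric
    {G : Type*} [Group G] (n : ℕ) (hn : 1 ≤ n) (S : Set G)
    (hS : IsTotallySymmetric S) (hfin : S.Finite) (hcard : S.ncard = n)
    (hord : ∀ s ∈ S, IsOfFinOrder s) :
    Infinite G ∨ Nat.card G ≥ 2 ^ (n - 1) * n.factorial := by
  classical
  cases finite_or_infinite G with
  | inr hG => exact Or.inl hG
  | inl hG =>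
  right
  obtain ⟨m, rfl⟩ : ∃ m, n = m + 1 := ⟨n - 1, (Nat.succ_pred_eq_of_pos hn).symm⟩
  haveI := hfin.fintype
  have hCard : Fintype.card S = m + 1 := by
    rw [← Nat.card_eq_fintype_card, Nat.card_coe_set_eq, hcard]
  let ι : Fin (m + 1) ≃ S := (Fintype.equivFinOfCardEq hCard).symm
  set s : Fin (m + 1) → G := fun i => ((ι i : S) : G) with hs_def
  have hsS : ∀ i, s i ∈ S := fun i => (ι i).2
  have hcomm : ∀ i j, Commute (s i) (s j) := fun i j => hS.1 _ (hsS i) _ (hsS j)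
  have hs_inj : Function.Injective s := fun a b h => ι.injective (Subtype.ext h)
  have conjex : ∀ σ : Equiv.Perm (Fin (m + 1)), ∃ h : G,
      ∀ j, h * s j * h⁻¹ = s (σ j) := by
    intro σ
    obtain ⟨h, hh⟩ := hS.2 (ι.permCongr σ)
    refine ⟨h, fun j => ?_⟩
    have h1 := hh (ι j)
    rw [Equiv.permCongr_apply, Equiv.symm_apply_apply] at h1
    exact h1
  -- key distinctness of subset products
  have main : ∀ T T' : Finset (Fin (m + 1)), Fin.last m ∉ T → Fin.last m ∉ T' →
      prodOf s hcomm T = prodOf s hcomm T' → ∀ i, i ∈ T → i ∉ T' → False := by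
    intro T T' hLT hLT' hPP i hiT hiT'
    have hiL : i ≠ Fin.last m := fun h => hLT (h ▸ hiT)
    set σ := Equiv.swap i (Fin.last m) with hσdef
    obtain ⟨g, hg⟩ := conjex σ
    have himgT : T.image σ = insert (Fin.last m) (T.erase i) := by
      conv_lhs => rw [← Finset.insert_erase hiT]
      rw [Finset.image_insert]
      have h1 : σ i = Fin.last m := Equiv.swap_apply_left _ _
      have h2 : (T.erase i).image σ = T.erase i := by
        calc (T.erase i).image σ = (T.erase i).image id :=
              Finset.image_congr (fun x hx => Equiv.swap_apply_of_ne_of_ne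
                (Finset.ne_of_mem_erase hx)
                (fun h => hLT (h ▸ Finset.mem_of_mem_erase hx)))
          _ = T.erase i := Finset.image_id
      rw [h1, h2]
    have himgT' : T'.image σ = T' := by
      calc T'.image σ = T'.image id :=
            Finset.image_congr (fun x hx => Equiv.swap_apply_of_ne_of_ne
              (fun h => hiT' (h ▸ hx)) (fun h => hLT' (h ▸ hx)))
        _ = T' := Finset.image_id
    have e1 := conj_prodOf s hcomm g σ σ.injective hg T
    have e2 := conj_prodOf s hcomm g σ σ.injective hg T'
    rw [himgT] at e1
    rw [himgT', ← hPP] at e2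
    have e3 : prodOf s hcomm (insert (Fin.last m) (T.erase i)) = prodOf s hcomm T :=
      e1.symm.trans e2
    rw [prodOf_insert s hcomm _ _ (fun h => hLT (Finset.mem_of_mem_erase h)),
      prodOf_erase s hcomm i T hiT] at e3
    exact hiL (hs_inj (mul_right_cancel e3)).symm
  have key1 : ∀ T T' : Finset (Fin (m + 1)), Fin.last m ∉ T → Fin.last m ∉ T' →
      prodOf s hcomm T = prodOf s hcomm T' → T = T' := by
    intro T T' hT hT' hPP
    by_contra hne
    have hex : ∃ i, (i ∈ T ∧ i ∉ T') ∨ (i ∈ T' ∧ i ∉ T) := by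
      by_contra hc
      push_neg at hc
      exact hne (Finset.ext fun a => ⟨(hc a).1, (hc a).2⟩)
    obtain ⟨i, ⟨h1, h2⟩ | ⟨h1, h2⟩⟩ := hex
    · exact main T T' hT hT' hPP i h1 h2
    · exact main T' T hT' hT hPP.symm i h1 h2
  -- the injection
  have hLnot : ∀ T : Finset (Fin m), Fin.last m ∉ T.map Fin.castSuccEmb := by
    intro T h
    obtain ⟨x, _, hx⟩ := Finset.mem_map.mp h
    exact (Fin.castSucc_lt_last x).ne hx
  choose hfun hfunspec using conjex
  set F : Equiv.Perm (Fin (m + 1)) × Finset (Fin m) → G :=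
    fun p => hfun p.1 * prodOf s hcomm (p.2.map Fin.castSuccEmb) with hF
  have hFinj : Function.Injective F := by
    rintro ⟨σ, T⟩ ⟨ρ, T'⟩ heq
    simp only [hF] at heq
    set A := prodOf s hcomm (T.map Fin.castSuccEmb) with hA
    set B := prodOf s hcomm (T'.map Fin.castSuccEmb) with hB
    have hσρ : σ = ρ := by
      apply Equiv.ext; intro j
      apply hs_inj
      have hc : Commute (s j) (B * A⁻¹) :=
        (prodOf_commute s hcomm j _).mul_right (prodOf_commute s hcomm j _).inv_right
      have hσe : hfun σ = hfun ρ * (B * A⁻¹) := by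
        rw [← mul_assoc]; exact eq_mul_inv_of_mul_eq heq
      have hx : (B * A⁻¹) * s j * (B * A⁻¹)⁻¹ = s j := by
        rw [← hc.eq]; group
      calc s (σ j) = hfun σ * s j * (hfun σ)⁻¹ := (hfunspec σ j).symm
        _ = hfun ρ * ((B * A⁻¹) * s j * (B * A⁻¹)⁻¹) * (hfun ρ)⁻¹ := by
            rw [hσe]; group
        _ = hfun ρ * s j * (hfun ρ)⁻¹ := by rw [hx]
        _ = s (ρ j) := hfunspec ρ j
    have hAB : A = B := by
      have h2 := heq
      rw [hσρ] at h2
      exact mul_left_cancel h2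
    have hTT' : T = T' :=
      Finset.map_injective Fin.castSuccEmb (key1 _ _ (hLnot T) (hLnot T') hAB)
    exact Prod.ext hσρ hTT'
  have hle := Nat.card_le_card_of_injective F hFinj
  have hdom : Nat.card (Equiv.Perm (Fin (m + 1)) × Finset (Fin m))
      = (m + 1).factorial * 2 ^ m := by
    simp [Nat.card_eq_fintype_card, Fintype.card_perm]
  rw [hdom] at hle
  rw [ge_iff_le, Nat.add_sub_cancel, mul_comm]
  exact hle
end

section
/- Let K be a field and let S be a finite totally symmetric subset of the general linear group GL(2, K) of invertible 2×2 matrices over K. Then S has at most 2 elements. -/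
private lemma gl2_key {K : Type*} [Field K]
    (a00 a01 a10 a11 x00 x01 x10 x11 y00 y01 y10 y11 : K)
    (ha : ¬(a01 = 0 ∧ a10 = 0 ∧ a00 = a11))
    (hx1 : x00*a00 + x01*a10 = a00*x00 + a01*x10)
    (hx2 : x00*a01 + x01*a11 = a00*x01 + a01*x11)
    (hx3 : x10*a00 + x11*a10 = a10*x00 + a11*x10)
    (hy1 : y00*a00 + y01*a10 = a00*y00 + a01*y10)
    (hy2 : y00*a01 + y01*a11 = a00*y01 + a01*y11)
    (hy3 : y10*a00 + y11*a10 = a10*y00 + a11*y10) :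
    (x00*y00 + x01*y10 = y00*x00 + y01*x10) ∧
    (x00*y01 + x01*y11 = y00*x01 + y01*x11) ∧
    (x10*y00 + x11*y10 = y10*x00 + y11*x10) ∧
    (x10*y01 + x11*y11 = y10*x01 + y11*x11) := by
  by_cases h01 : a01 ≠ 0
  · refine ⟨mul_left_cancel₀ h01 ?_, mul_left_cancel₀ h01 ?_,
      mul_left_cancel₀ (pow_ne_zero 2 h01) ?_, mul_left_cancel₀ h01 ?_⟩
    · linear_combination y01 * hx1 - x01 * hy1
    · linear_combination y01 * hx2 - x01 * hy2
    · linear_combination a10*x01*hy2 - a10*y01*hx2 - (a01*(x11-x00))*hy1 + (a01*(y11-y00))*hx1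
    · linear_combination x01 * hy1 - y01 * hx1
  push_neg at h01
  by_cases h10 : a10 ≠ 0
  · refine ⟨mul_left_cancel₀ h10 ?_, mul_left_cancel₀ (pow_ne_zero 2 h10) ?_,
      mul_left_cancel₀ h10 ?_, mul_left_cancel₀ h10 ?_⟩
    · linear_combination y10 * hx1 - x10 * hy1
    · linear_combination a01*x10*hy3 - a01*y10*hx3 + (a10*(x00-x11))*hy1 - (a10*(y00-y11))*hx1
    · linear_combination y10 * hx3 - x10 * hy3
    · linear_combination x10 * hy1 - y10 * hx1
  push_neg at h10
  have hd : a00 - a11 ≠ 0 := fun h => ha ⟨h01, h10, sub_eq_zero.mp h⟩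
  subst h01 h10
  have hx01 : x01 = 0 := by
    simpa using mul_left_cancel₀ hd (show (a00-a11)*x01 = (a00-a11)*0 by linear_combination -hx2)
  have hx10 : x10 = 0 := by
    simpa using mul_left_cancel₀ hd (show (a00-a11)*x10 = (a00-a11)*0 by linear_combination hx3)
  have hy01 : y01 = 0 := by
    simpa using mul_left_cancel₀ hd (show (a00-a11)*y01 = (a00-a11)*0 by linear_combination -hy2)
  have hy10 : y10 = 0 := by
    simpa using mul_left_cancel₀ hd (show (a00-a11)*y10 = (a00-a11)*0 by linear_combination hy3)
  subst hx01 hx10 hy01 hy10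
  exact ⟨by ring, by ring, by ring, by ring⟩

/-- In `M₂(K)`, any two matrices commuting with a fixed non-scalar matrix commute
with each other. -/
private lemma gl2_centralizer_comm {K : Type*} [Field K] (a x y : Matrix (Fin 2) (Fin 2) K)
    (ha : ¬(a 0 1 = 0 ∧ a 1 0 = 0 ∧ a 0 0 = a 1 1))
    (hx : x * a = a * x) (hy : y * a = a * y) : x * y = y * x := by
  have ex := fun i j => congrFun (congrFun hx i) j
  have ey := fun i j => congrFun (congrFun hy i) j
  simp only [Matrix.mul_apply, Fin.sum_univ_two] at ex ey
  obtain ⟨g1, g2, g3, g4⟩ := gl2_key (a 0 0) (a 0 1) (a 1 0) (a 1 1)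
    (x 0 0) (x 0 1) (x 1 0) (x 1 1) (y 0 0) (y 0 1) (y 1 0) (y 1 1)
    ha (ex 0 0) (ex 0 1) (ex 1 0) (ey 0 0) (ey 0 1) (ey 1 0)
  ext i j
  fin_cases i <;> fin_cases j <;>
    simp only [Matrix.mul_apply, Fin.sum_univ_two] <;> assumption

/-- A finite totally symmetric subset of `GL(2, K)` has at most two elements. -/
theorem totallySymmetric_GL2_card_le_two
    {K : Type*} [Field K] (S : Set (Matrix.GeneralLinearGroup (Fin 2) K))
    (hS : IsTotallySymmetric S) (hfin : S.Finite) :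
    S.ncard ≤ 2 := by
  classical
  by_contra hcard
  push_neg at hcard
  obtain ⟨t, hts, ht3⟩ := Set.exists_subset_card_eq (show 3 ≤ S.ncard by omega)
  obtain ⟨a, b, c, hab, hac, hbc, rfl⟩ := Set.ncard_eq_three.mp ht3
  have haS : a ∈ S := hts (by simp)
  have hbS : b ∈ S := hts (by simp)
  have hcS : c ∈ S := hts (by simp)
  -- `a` is not a scalar matrix
  have hnsc : ¬((a : Matrix (Fin 2) (Fin 2) K) 0 1 = 0 ∧
      (a : Matrix (Fin 2) (Fin 2) K) 1 0 = 0 ∧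
      (a : Matrix (Fin 2) (Fin 2) K) 0 0 = (a : Matrix (Fin 2) (Fin 2) K) 1 1) := by
    rintro ⟨h1, h2, h3⟩
    have hsc : (a : Matrix (Fin 2) (Fin 2) K) =
        ((a : Matrix (Fin 2) (Fin 2) K) 0 0) • (1 : Matrix (Fin 2) (Fin 2) K) := by
      ext i j
      fin_cases i <;> fin_cases j <;>
        simp [Matrix.one_apply, h1, h2, ← h3]
    have hcen : ∀ g : Matrix.GeneralLinearGroup (Fin 2) K, g * a = a * g := by
      intro g
      apply Units.ext
      rw [Units.val_mul, Units.val_mul, hsc, mul_smul_comm, smul_mul_assoc, one_mul, mul_one]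
    obtain ⟨h, hh⟩ := hS.2 (Equiv.swap ⟨a, haS⟩ ⟨b, hbS⟩)
    have h1 := hh ⟨a, haS⟩
    rw [Equiv.swap_apply_left] at h1
    apply hab
    calc a = h * a * h⁻¹ := by rw [hcen h]; group
    _ = b := h1
  -- the permutation swapping b and c, fixing a
  obtain ⟨h, hh⟩ := hS.2 (Equiv.swap ⟨b, hbS⟩ ⟨c, hcS⟩)
  have hfix : h * a * h⁻¹ = a := by
    have h1 := hh ⟨a, haS⟩
    rwa [Equiv.swap_apply_of_ne_of_ne
      (by simp [Subtype.ext_iff]; exact hab) (by simp [Subtype.ext_iff]; exact hac)] at h1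
  have hswap : h * b * h⁻¹ = c := by
    have h1 := hh ⟨b, hbS⟩
    rwa [Equiv.swap_apply_left] at h1
  have hha : h * a = a * h := by
    have := mul_inv_eq_iff_eq_mul.mp hfix
    exact this
  have hba : b * a = a * b := hS.1 b hbS a haS
  have hmx : (h : Matrix (Fin 2) (Fin 2) K) * a = (a : Matrix (Fin 2) (Fin 2) K) * h := by
    have := congrArg Units.val hha
    simpa [Units.val_mul] using this
  have hmb : (b : Matrix (Fin 2) (Fin 2) K) * a = (a : Matrix (Fin 2) (Fin 2) K) * b := by
    have := congrArg Units.val hba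
    simpa [Units.val_mul] using this
  have hcomm := gl2_centralizer_comm (a : Matrix (Fin 2) (Fin 2) K) h b hnsc hmx hmb
  have hhb : h * b = b * h := Units.ext (by simpa [Units.val_mul] using hcomm)
  apply hbc
  calc b = h * b * h⁻¹ := by rw [hhb]; group
  _ = c := hswap
end

section
/- Let p be a prime with p ≠ 2 and p ≠ 3, let r ≥ 1, and let K be the finite field with p^r elements. For every n ≥ 6, every group homomorphism from the braid group B_n to the projective special linear group PSL(2, K) has cyclic image. -/
section Auxiliary

open scoped MatrixGroups

variable {K : Type*} [Field K]

local notation "SL2" => Matrix.SpecialLinearGroup (Fin 2) K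
local notation "PSL2" => Matrix.ProjectiveSpecialLinearGroup (Fin 2) K

/-- Any `2×2` matrix commuting with a nonscalar matrix `m` is a linear combination
of `1` and `m`. -/
lemma span_of_commute (m x : Matrix (Fin 2) (Fin 2) K)
    (hm : ¬(m 0 1 = 0 ∧ m 1 0 = 0 ∧ m 0 0 = m 1 1))
    (hx : x * m = m * x) : ∃ α β : K, x = α • (1 : Matrix (Fin 2) (Fin 2) K) + β • m := by
  have hx' : ∀ i j, (x * m) i j = (m * x) i j := fun i j => by rw [hx]
  simp only [Matrix.mul_apply, Fin.sum_univ_two] at hx'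
  have E1 := hx' 0 0
  have E2 := hx' 0 1
  have E3 := hx' 1 0
  by_cases h01 : m 0 1 = 0
  · by_cases h10 : m 1 0 = 0
    · have hd : m 0 0 ≠ m 1 1 := fun h => hm ⟨h01, h10, h⟩
      have hx01 : x 0 1 = 0 := by
        have h : x 0 1 * (m 1 1 - m 0 0) = 0 := by
          rw [h01] at E2; linear_combination E2
        rcases mul_eq_zero.mp h with h | h
        · exact h
        · exact absurd (by linear_combination h) hd.symm
      have hx10 : x 1 0 = 0 := by
        have h : x 1 0 * (m 0 0 - m 1 1) = 0 := by
          rw [h10] at E3; linear_combination E3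
        rcases mul_eq_zero.mp h with h | h
        · exact h
        · exact absurd (by linear_combination h) hd
      refine ⟨(x 0 0 * m 1 1 - x 1 1 * m 0 0) / (m 1 1 - m 0 0),
              (x 1 1 - x 0 0) / (m 1 1 - m 0 0), ?_⟩
      have hsub : m 1 1 - m 0 0 ≠ 0 := sub_ne_zero.mpr (Ne.symm hd)
      ext i j
      fin_cases i <;> fin_cases j <;>
        simp [Matrix.add_apply, Matrix.smul_apply, Matrix.one_apply, hx01, hx10, h01, h10] <;>
        field_simp <;> ring
    · refine ⟨x 0 0 - (x 1 0 / m 1 0) * m 0 0, x 1 0 / m 1 0, ?_⟩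
      have hx01 : x 0 1 = 0 := by
        rw [h01] at E1
        rcases mul_eq_zero.mp (show x 0 1 * m 1 0 = 0 by linear_combination E1) with h | h
        · exact h
        · exact absurd h h10
      ext i j
      fin_cases i <;> fin_cases j <;>
        simp [Matrix.add_apply, Matrix.smul_apply, Matrix.one_apply, hx01, h01] <;>
        field_simp <;> linear_combination E3
  · refine ⟨x 0 0 - (x 0 1 / m 0 1) * m 0 0, x 0 1 / m 0 1, ?_⟩
    ext i j
    fin_cases i <;> fin_cases j <;>
      simp [Matrix.add_apply, Matrix.smul_apply, Matrix.one_apply] <;>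
      field_simp
    · linear_combination -E1
    · linear_combination -E2

lemma sq_eq_neg_one_of_trace_zero (m : Matrix (Fin 2) (Fin 2) K)
    (htr : m 0 0 + m 1 1 = 0) (hdet : m.det = 1) : m * m = -1 := by
  rw [Matrix.det_fin_two] at hdet
  ext i j
  fin_cases i <;> fin_cases j <;>
    simp [Matrix.mul_apply, Fin.sum_univ_two, Matrix.one_apply]
  · linear_combination m 0 0 * htr - hdet
  · linear_combination m 0 1 * htr
  · linear_combination m 1 0 * htr
  · linear_combination m 1 1 * htr - hdet

/-- Lifting commutativity from `PSL(2,K)` to `SL(2,K)` for elements whose image has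
square different from `1`. -/
lemma sl_comm_of_psl_comm (h2 : (2:K) ≠ 0) (U A : SL2)
    (hU2 : ((U : PSL2))^2 ≠ 1)
    (h : (A : PSL2) * (U : PSL2) = (U : PSL2) * (A : PSL2)) :
    A * U = U * A := by
  have hz : (A * U)⁻¹ * (U * A) ∈ Subgroup.center SL2 := by
    rw [← QuotientGroup.eq]
    exact h
  obtain ⟨r, hr2, hrz⟩ := Matrix.SpecialLinearGroup.mem_center_iff.mp hz
  simp only [Fintype.card_fin] at hr2
  have hr' : (r - 1) * (r + 1) = 0 := by linear_combination hr2
  rcases mul_eq_zero.mp hr' with hr | hr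
  · have hr1 : r = 1 := by linear_combination hr
    have h1 : (A * U)⁻¹ * (U * A) = 1 := by
      apply Subtype.ext
      rw [← hrz, hr1]
      simp
    exact inv_mul_eq_one.mp h1
  · exfalso
    have hrm : r = -1 := by linear_combination hr
    set z : SL2 := (A * U)⁻¹ * (U * A) with hzdef
    have hzcoe : (z : Matrix (Fin 2) (Fin 2) K) = -1 := by
      rw [← hrz, hrm, map_neg, map_one]
    have he : A⁻¹ * U * A = U * z := by rw [hzdef]; group
    have hec : ((A⁻¹ * U * A : SL2) : Matrix (Fin 2) (Fin 2) K)
        = -(U : Matrix (Fin 2) (Fin 2) K) := by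
      rw [he]
      simp [hzcoe]
    have htr' : Matrix.trace (((A⁻¹ * U * A : SL2) : Matrix (Fin 2) (Fin 2) K))
        = Matrix.trace ((U : Matrix (Fin 2) (Fin 2) K)) := by
      have e1 : ((A⁻¹ * U * A : SL2) : Matrix (Fin 2) (Fin 2) K)
          = ((A⁻¹ * U : SL2) : Matrix (Fin 2) (Fin 2) K) * ((A : SL2) : Matrix (Fin 2) (Fin 2) K) :=
        Matrix.SpecialLinearGroup.coe_mul _ _
      have e2 : ((A : SL2) : Matrix (Fin 2) (Fin 2) K) * ((A⁻¹ * U : SL2) : Matrix (Fin 2) (Fin 2) K)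
          = ((A * (A⁻¹ * U) : SL2) : Matrix (Fin 2) (Fin 2) K) :=
        (Matrix.SpecialLinearGroup.coe_mul _ _).symm
      rw [e1, Matrix.trace_mul_comm, e2, show A * (A⁻¹ * U) = U by group]
    rw [hec] at htr'
    have htr0 : (U : Matrix (Fin 2) (Fin 2) K) 0 0 + (U : Matrix (Fin 2) (Fin 2) K) 1 1 = 0 := by
      have h22 : (2:K) * Matrix.trace ((U : Matrix (Fin 2) (Fin 2) K)) = 0 := by
        have h' := htr'
        rw [Matrix.trace_neg] at h'
        linear_combination - h'
      rcases mul_eq_zero.mp h22 with h' | h'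
      · exact absurd h' h2
      · simpa [Matrix.trace_fin_two] using h'
    have hU2' : ((U : Matrix (Fin 2) (Fin 2) K)) * U = -1 :=
      sq_eq_neg_one_of_trace_zero _ htr0 U.2
    apply hU2
    have hUsq : U^2 ∈ Subgroup.center SL2 := by
      rw [Matrix.SpecialLinearGroup.mem_center_iff]
      refine ⟨-1, by simp, ?_⟩
      have hc : ((U^2 : SL2) : Matrix (Fin 2) (Fin 2) K) = -1 := by
        rw [pow_two]; simpa using hU2'
      rw [map_neg, map_one, hc]
    have hpow : ((U : PSL2))^2 = ((U^2 : SL2) : PSL2) := rfl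
    rw [hpow]
    exact (QuotientGroup.eq_one_iff _).mpr hUsq

/-- The centralizer of any element `u` of `PSL(2,K)` with `u² ≠ 1` is abelian
(in characteristic different from two). -/
lemma psl_CA (h2 : (2:K) ≠ 0) (u a b : PSL2) (hu : u^2 ≠ 1)
    (ha : a * u = u * a) (hb : b * u = u * b) : a * b = b * a := by
  revert hu ha hb
  refine QuotientGroup.induction_on u fun U =>
    QuotientGroup.induction_on a fun A =>
      QuotientGroup.induction_on b fun B => ?_
  intro hu ha hb
  have hA := sl_comm_of_psl_comm h2 U A hu ha
  have hB := sl_comm_of_psl_comm h2 U B hu hb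
  have hns : ¬((U : Matrix (Fin 2) (Fin 2) K) 0 1 = 0 ∧ (U : Matrix (Fin 2) (Fin 2) K) 1 0 = 0 ∧
      (U : Matrix (Fin 2) (Fin 2) K) 0 0 = (U : Matrix (Fin 2) (Fin 2) K) 1 1) := by
    rintro ⟨e1, e2, e3⟩
    apply hu
    have hsc : (U : Matrix (Fin 2) (Fin 2) K)
        = Matrix.scalar (Fin 2) ((U : Matrix (Fin 2) (Fin 2) K) 0 0) := by
      ext i j
      fin_cases i <;> fin_cases j <;>
        simp [Matrix.scalar_apply, Matrix.diagonal, e1, e2, ← e3, Matrix.one_apply]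
    have hdet : (U : Matrix (Fin 2) (Fin 2) K) 0 0 ^ 2 = 1 := by
      have hd := U.2
      rw [Matrix.det_fin_two] at hd
      linear_combination hd + ((U : Matrix (Fin 2) (Fin 2) K) 0 0) * e3 +
        (U : Matrix (Fin 2) (Fin 2) K) 0 1 * e2
    have hU : U ∈ Subgroup.center SL2 := by
      rw [Matrix.SpecialLinearGroup.mem_center_iff]
      exact ⟨(U : Matrix (Fin 2) (Fin 2) K) 0 0, by simpa using hdet, hsc.symm⟩
    have h1 : ((U : SL2) : PSL2) = 1 := (QuotientGroup.eq_one_iff _).mpr hU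
    rw [h1, one_pow]
  have hxA : (A : Matrix (Fin 2) (Fin 2) K) * (U : Matrix (Fin 2) (Fin 2) K)
      = (U : Matrix (Fin 2) (Fin 2) K) * (A : Matrix (Fin 2) (Fin 2) K) := by
    calc (A : Matrix (Fin 2) (Fin 2) K) * (U : Matrix (Fin 2) (Fin 2) K)
        = ((A * U : SL2) : Matrix (Fin 2) (Fin 2) K) := (Matrix.SpecialLinearGroup.coe_mul _ _).symm
      _ = ((U * A : SL2) : Matrix (Fin 2) (Fin 2) K) := by rw [hA]
      _ = _ := Matrix.SpecialLinearGroup.coe_mul _ _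
  have hxB : (B : Matrix (Fin 2) (Fin 2) K) * (U : Matrix (Fin 2) (Fin 2) K)
      = (U : Matrix (Fin 2) (Fin 2) K) * (B : Matrix (Fin 2) (Fin 2) K) := by
    calc (B : Matrix (Fin 2) (Fin 2) K) * (U : Matrix (Fin 2) (Fin 2) K)
        = ((B * U : SL2) : Matrix (Fin 2) (Fin 2) K) := (Matrix.SpecialLinearGroup.coe_mul _ _).symm
      _ = ((U * B : SL2) : Matrix (Fin 2) (Fin 2) K) := by rw [hB]
      _ = _ := Matrix.SpecialLinearGroup.coe_mul _ _
  obtain ⟨α, β, hAr⟩ := span_of_commute _ _ hns hxA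
  obtain ⟨γ, δ, hBr⟩ := span_of_commute _ _ hns hxB
  have hAB : A * B = B * A := by
    apply Subtype.ext
    rw [Matrix.SpecialLinearGroup.coe_mul, Matrix.SpecialLinearGroup.coe_mul, hAr, hBr]
    simp only [add_mul, mul_add, smul_mul_assoc, mul_smul_comm, smul_smul, one_mul, mul_one]
    module
  show ((A : SL2) : PSL2) * ((B : SL2) : PSL2) = ((B : SL2) : PSL2) * ((A : SL2) : PSL2)
  calc ((A : SL2) : PSL2) * ((B : SL2) : PSL2) = ((A * B : SL2) : PSL2) := rfl
    _ = ((B * A : SL2) : PSL2) := by rw [hAB]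
    _ = _ := rfl

end Auxiliary

section Endgame

variable {G : Type*} [Group G]

lemma braid_eq_of_comm {a b : G} (hbr : a * b * a = b * a * b) (hco : a * b = b * a) :
    a = b := by
  have h1 : b * a * a = b * b * a := by
    calc b * a * a = a * b * a := by rw [← hco]
      _ = b * a * b := hbr
      _ = b * b * a := by rw [mul_assoc, hco, ← mul_assoc]
  exact mul_left_cancel (mul_right_cancel h1)

/-- If a group `G` is such that centralizers of elements of square different from one are
abelian, then any sequence in `G` satisfying the braid relations (with at least five terms)
is constant. -/
lemma braid_all_eq
    (CA : ∀ u a b : G, u^2 ≠ 1 → a*u = u*a → b*u = u*b → a*b = b*a)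
    {m : ℕ} (hm : 5 ≤ m) (Y : ℕ → G)
    (hC : ∀ k l, k + 2 ≤ l → l < m → Y k * Y l = Y l * Y k)
    (hB : ∀ k, k + 1 < m → Y k * Y (k+1) * Y k = Y (k+1) * Y k * Y (k+1)) :
    ∀ k, k < m → Y k = Y 0 := by
  have hconj : ∀ k, k + 1 < m → ∃ c : G, Y (k+1) = c * Y k * c⁻¹ := by
    intro k hk
    refine ⟨Y k * Y (k+1), ?_⟩
    have h1 : (Y k * Y (k+1)) * Y k * (Y k * Y (k+1))⁻¹
        = (Y k * Y (k+1) * Y k) * ((Y (k+1))⁻¹ * (Y k)⁻¹) := by group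
    rw [h1, hB k hk]
    group
  have sqA : ∀ k, k < m → (((Y k)^2 = 1 ↔ (Y 0)^2 = 1) ∧ (Y k = 1 ↔ Y 0 = 1)) := by
    intro k
    induction k with
    | zero => intro _; exact ⟨Iff.rfl, Iff.rfl⟩
    | succ k ih =>
      intro hk
      obtain ⟨c, hc⟩ := hconj k hk
      have ihk := ih (by omega)
      constructor
      · rw [hc, conj_pow, conj_eq_one_iff]
        exact ihk.1
      · rw [hc, conj_eq_one_iff]
        exact ihk.2
  have up : ∀ j, j + 2 < m → Y j = Y (j+1) → Y (j+1) = Y (j+2) := by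
    intro j hj he
    apply braid_eq_of_comm (hB (j+1) (by omega))
    have h := hC j (j+2) (by omega) hj
    rw [he] at h
    exact h
  have down : ∀ j, j + 2 < m → Y (j+1) = Y (j+2) → Y j = Y (j+1) := by
    intro j hj he
    apply braid_eq_of_comm (hB j (by omega))
    have h := hC j (j+2) (by omega) hj
    rw [← he] at h
    exact h
  have adj : ∀ k, k + 1 < m → Y k = Y (k+1) := by
    by_cases hs : (Y 0)^2 = 1
    · by_cases h1 : Y 0 = 1
      · intro k hk
        rw [(sqA k (by omega)).2.mpr h1, (sqA (k+1) hk).2.mpr h1]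
      · have hsq : ∀ k, k < m → (Y k)^2 = 1 := fun k hk => (sqA k hk).1.mpr hs
        have h34 : Y 3 = Y 4 := by
          by_contra h34
          have h01 : Y 0 ≠ Y 1 := by
            intro e
            exact h34 (up 2 (by omega) (up 1 (by omega) (up 0 (by omega) e)))
          set u := Y 0 * Y 1 with hu
          have hu3 : u^3 = 1 := by
            have e1 : u^3 = (Y 0 * Y 1 * Y 0) * (Y 1 * Y 0 * Y 1) := by
              rw [hu]; simp only [pow_succ, pow_zero, one_mul, mul_assoc]
            rw [e1, ← hB 0 (by omega)]
            have e2 : (Y 0 * Y 1 * Y 0) * (Y 0 * Y 1 * Y 0)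
                = Y 0 * (Y 1 * (Y 0)^2 * Y 1) * Y 0 := by
              simp only [pow_two, mul_assoc]
            rw [e2, hsq 0 (by omega), mul_one, ← pow_two, hsq 1 (by omega), mul_one,
              ← pow_two, hsq 0 (by omega)]
          have hune : u ≠ 1 := by
            intro e
            apply h01
            have h2 : Y 0 = (Y 1)⁻¹ := eq_inv_of_mul_eq_one_left e
            have h3 : (Y 1)⁻¹ = Y 1 :=
              inv_eq_of_mul_eq_one_right (by rw [← pow_two]; exact hsq 1 (by omega))
            rw [h2, h3]
          have hu2 : u^2 ≠ 1 := by
            intro e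
            apply hune
            calc u = u * u^2 * (u^2)⁻¹ := (mul_inv_cancel_right _ _).symm
              _ = u^3 * (u^2)⁻¹ := by rw [← pow_succ']
              _ = 1 := by rw [hu3, e]; simp
          have c03 := hC 0 3 (by omega) (by omega)
          have c13 := hC 1 3 (by omega) (by omega)
          have c04 := hC 0 4 (by omega) (by omega)
          have c14 := hC 1 4 (by omega) (by omega)
          have hc3 : Y 3 * u = u * Y 3 := by
            rw [hu]
            calc Y 3 * (Y 0 * Y 1) = Y 0 * Y 3 * Y 1 := by rw [← mul_assoc, ← c03]
              _ = Y 0 * (Y 1 * Y 3) := by rw [mul_assoc, ← c13]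
              _ = Y 0 * Y 1 * Y 3 := by rw [← mul_assoc]
          have hc4 : Y 4 * u = u * Y 4 := by
            rw [hu]
            calc Y 4 * (Y 0 * Y 1) = Y 0 * Y 4 * Y 1 := by rw [← mul_assoc, ← c04]
              _ = Y 0 * (Y 1 * Y 4) := by rw [mul_assoc, ← c14]
              _ = Y 0 * Y 1 * Y 4 := by rw [← mul_assoc]
          exact h34 (braid_eq_of_comm (hB 3 (by omega)) (CA u (Y 3) (Y 4) hu2 hc3 hc4))
        have e3 : ∀ k, 3 ≤ k → k + 1 < m → Y k = Y (k+1) := by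
          intro k hk3
          induction k, hk3 using Nat.le_induction with
          | base => intro _; exact h34
          | succ k hk ih => intro hkm; exact up k hkm (ih (by omega))
        have E2 : Y 2 = Y 3 := down 2 (by omega) h34
        have E1 : Y 1 = Y 2 := down 1 (by omega) E2
        have E0 : Y 0 = Y 1 := down 0 (by omega) E1
        intro k hk
        match k with
        | 0 => exact E0
        | 1 => exact E1
        | 2 => exact E2
        | (k+3) => exact e3 (k+3) (by omega) hk
    · intro k hk
      have hsq : ∀ j, j < m → (Y j)^2 ≠ 1 := fun j hj e => hs ((sqA j hj).1.mp e)
      by_cases hj : k + 3 < m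
      · exact braid_eq_of_comm (hB k hk)
          (CA (Y (k+3)) (Y k) (Y (k+1)) (hsq (k+3) hj)
            (hC k (k+3) (by omega) hj) (hC (k+1) (k+3) (by omega) hj))
      · obtain ⟨j, rfl⟩ : ∃ j, k = j + 2 := ⟨k - 2, by omega⟩
        exact braid_eq_of_comm (hB (j+2) hk)
          (CA (Y j) (Y (j+2)) (Y (j+3)) (hsq j (by omega))
            (hC j (j+2) (by omega) (by omega)).symm
            (hC j (j+3) (by omega) (by omega)).symm)
  intro k
  induction k with
  | zero => intro _; rfl
  | succ k ih =>
    intro hk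
    rw [← adj k hk]
    exact ih (by omega)

end Endgame

open scoped MatrixGroups in
/-- For a prime `p ∉ {2,3}`, `r ≥ 1` and `n ≥ 6`, every homomorphism from the braid group
`B_n` to `PSL(2, 𝔽_{p^r})` has cyclic image. -/
theorem braid_to_PSL2_cyclic
    (p : ℕ) [Fact p.Prime] (hp2 : p ≠ 2) (hp3 : p ≠ 3) (r : ℕ) (hr : 1 ≤ r)
    (n : ℕ) (hn : 6 ≤ n)
    (f : BraidGroup n →* PSL(2, GaloisField p r)) :
    IsCyclic f.range := by
  classical
  have hK2 : (2 : GaloisField p r) ≠ 0 := by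
    have h2 : ((2 : ℕ) : GaloisField p r) ≠ 0 := by
      rw [Ne, CharP.cast_eq_zero_iff (GaloisField p r) p 2]
      intro hdvd
      exact hp2 ((Nat.prime_dvd_prime_iff_eq Fact.out Nat.prime_two).mp hdvd)
    simpa using h2
  set y : Fin (n-1) → PSL(2, GaloisField p r) := fun i => f (braidGen i) with hy
  have relc : ∀ i j : Fin (n-1), (i:ℕ) + 2 ≤ (j:ℕ) → y i * y j = y j * y i := by
    intro i j hij
    have hrel : (FreeGroup.of i * FreeGroup.of j * (FreeGroup.of i)⁻¹ * (FreeGroup.of j)⁻¹)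
        ∈ braidRels (n-1) := Or.inl ⟨i, j, hij, rfl⟩
    have h1 : PresentedGroup.mk (braidRels (n-1))
        (FreeGroup.of i * FreeGroup.of j * (FreeGroup.of i)⁻¹ * (FreeGroup.of j)⁻¹) = 1 :=
      (QuotientGroup.eq_one_iff _).mpr (Subgroup.subset_normalClosure hrel)
    simp only [map_mul, map_inv] at h1
    have h2 := congrArg f (show (braidGen i * braidGen j * (braidGen i)⁻¹ * (braidGen j)⁻¹ : BraidGroup n) = 1 from h1)
    simp only [map_mul, map_inv, map_one] at h2
    have h2' : y i * y j * (y i)⁻¹ * (y j)⁻¹ = 1 := h2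
    have h3 : y i * y j * (y i)⁻¹ = ((y j)⁻¹)⁻¹ := mul_eq_one_iff_eq_inv.mp h2'
    rw [inv_inv] at h3
    exact mul_inv_eq_iff_eq_mul.mp h3
  have relb : ∀ i j : Fin (n-1), (j:ℕ) = (i:ℕ) + 1 → y i * y j * y i = y j * y i * y j := by
    intro i j hij
    have hrel : (FreeGroup.of i * FreeGroup.of j * FreeGroup.of i *
        (FreeGroup.of j * FreeGroup.of i * FreeGroup.of j)⁻¹) ∈ braidRels (n-1) :=
      Or.inr ⟨i, j, hij, rfl⟩
    have h1 : PresentedGroup.mk (braidRels (n-1))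
        (FreeGroup.of i * FreeGroup.of j * FreeGroup.of i *
          (FreeGroup.of j * FreeGroup.of i * FreeGroup.of j)⁻¹) = 1 :=
      (QuotientGroup.eq_one_iff _).mpr (Subgroup.subset_normalClosure hrel)
    simp only [map_mul, map_inv] at h1
    have h2 := congrArg f (show (braidGen i * braidGen j * braidGen i * (braidGen j * braidGen i * braidGen j)⁻¹ : BraidGroup n) = 1 from h1)
    simp only [map_mul, map_inv, map_one] at h2
    have h2' : y i * y j * y i * (y j * y i * y j)⁻¹ = 1 := h2
    exact mul_inv_eq_one.mp h2'
  have hm : 5 ≤ n - 1 := by omega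
  set Y : ℕ → PSL(2, GaloisField p r) :=
    fun k => if h : k < n - 1 then y ⟨k, h⟩ else 1 with hY
  have hC : ∀ k l, k + 2 ≤ l → l < n - 1 → Y k * Y l = Y l * Y k := by
    intro k l hkl hl
    have hk : k < n - 1 := by omega
    simp only [hY, dif_pos hk, dif_pos hl]
    exact relc ⟨k, hk⟩ ⟨l, hl⟩ hkl
  have hB : ∀ k, k + 1 < n - 1 → Y k * Y (k+1) * Y k = Y (k+1) * Y k * Y (k+1) := by
    intro k hk1
    have hk : k < n - 1 := by omega
    simp only [hY, dif_pos hk, dif_pos hk1]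
    exact relb ⟨k, hk⟩ ⟨k+1, hk1⟩ rfl
  have hall := braid_all_eq (psl_CA hK2) hm Y hC hB
  have hygen : ∀ i : Fin (n-1), y i = Y 0 := by
    intro i
    have h := hall (i : ℕ) i.isLt
    rw [hY] at h
    simp only [dif_pos i.isLt] at h
    rw [Fin.eta] at h
    exact h
  have hrange : ∀ x : BraidGroup n, f x ∈ Subgroup.zpowers (Y 0) := by
    intro x
    refine PresentedGroup.generated_by (braidRels (n-1))
      ((Subgroup.zpowers (Y 0)).comap f) (fun j => ?_) x
    show f (braidGen j) ∈ Subgroup.zpowers (Y 0)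
    have hmem : y j ∈ Subgroup.zpowers (Y 0) := by
      rw [hygen j]; exact Subgroup.mem_zpowers _
    exact hmem
  have h0lt : 0 < n - 1 := by omega
  refine ⟨⟨⟨Y 0, ⟨braidGen ⟨0, h0lt⟩, hygen _⟩⟩, ?_⟩⟩
  rintro ⟨v, hv⟩
  obtain ⟨w, rfl⟩ := MonoidHom.mem_range.mp hv
  obtain ⟨k, hk⟩ := Subgroup.mem_zpowers_iff.mp (hrange w)
  refine Subgroup.mem_zpowers_iff.mpr ⟨k, ?_⟩
  apply Subtype.ext
  rw [SubgroupClass.coe_zpow]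
  exact hk
end

section
/- Let K be the finite field with 8 elements. Then: (i) for every n ≥ 6, every group homomorphism from the braid group B_n to PSL(2, K) has cyclic image; and (ii) for every n ≥ 8, every group homomorphism from the commutator subgroup B_n' of B_n to PSL(2, K) is trivial. -/
namespace BraidAux

/-- ℕ-indexed generators, with dummy value 1 out of range. -/
def bg (n : ℕ) (i : ℕ) : BraidGroup n :=
  if h : i < n - 1 then braidGen ⟨i, h⟩ else 1

lemma rel_eq_one {n : ℕ} {r : FreeGroup (Fin (n-1))} (hr : r ∈ braidRels (n-1)) :
    (PresentedGroup.mk (braidRels (n-1)) r : BraidGroup n) = 1 :=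
  (QuotientGroup.eq_one_iff r).2 (Subgroup.subset_normalClosure hr)

lemma bg_comm {n : ℕ} {i j : ℕ} (h : i + 2 ≤ j) : Commute (bg n i) (bg n j) := by
  unfold bg
  by_cases hj : j < n - 1
  · have hi : i < n - 1 := by omega
    rw [dif_pos hj, dif_pos hi]
    rw [← commutatorElement_eq_one_iff_commute]
    have hrel : (FreeGroup.of (⟨i, hi⟩ : Fin (n-1)) * FreeGroup.of (⟨j, hj⟩ : Fin (n-1)) *
        (FreeGroup.of (⟨i, hi⟩ : Fin (n-1)))⁻¹ * (FreeGroup.of (⟨j, hj⟩ : Fin (n-1)))⁻¹)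
        ∈ braidRels (n-1) := Or.inl ⟨⟨i, hi⟩, ⟨j, hj⟩, h, rfl⟩
    have := rel_eq_one (n := n) hrel
    simp only [map_mul, map_inv] at this
    exact this
  · rw [dif_neg hj]
    exact Commute.one_right _

lemma bg_braid {n : ℕ} {i : ℕ} (h : i + 1 < n - 1) :
    bg n i * bg n (i+1) * bg n i = bg n (i+1) * bg n i * bg n (i+1) := by
  have hi : i < n - 1 := by omega
  unfold bg
  rw [dif_pos h, dif_pos hi]
  have hrel : (FreeGroup.of (⟨i, hi⟩ : Fin (n-1)) * FreeGroup.of (⟨i+1, h⟩ : Fin (n-1)) *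
      FreeGroup.of (⟨i, hi⟩ : Fin (n-1)) *
      (FreeGroup.of (⟨i+1, h⟩ : Fin (n-1)) * FreeGroup.of (⟨i, hi⟩ : Fin (n-1)) *
       FreeGroup.of (⟨i+1, h⟩ : Fin (n-1)))⁻¹) ∈ braidRels (n-1) :=
    Or.inr ⟨⟨i, hi⟩, ⟨i+1, h⟩, rfl, rfl⟩
  have h1 := rel_eq_one (n := n) hrel
  simp only [map_mul, map_inv] at h1
  have := mul_inv_eq_one.1 h1
  exact this

end BraidAux

namespace BraidAux

/-- Partial product of generators `σ_1 ⋯ σ_k`. -/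
def D (n k : ℕ) : BraidGroup n := ((List.range k).map (bg n)).prod

/-- The full twist shift element `σ_1 σ_2 ⋯ σ_{n-1}`. -/
def cbraid (n : ℕ) : BraidGroup n := D n (n - 1)

lemma D_succ (n k : ℕ) : D n (k+1) = D n k * bg n k := by
  unfold D
  rw [List.range_succ, List.map_append, List.prod_append]
  simp

lemma commute_bg_D {n j i : ℕ} (h : i + 1 ≤ j) : Commute (bg n j) (D n i) := by
  induction i with
  | zero => simp only [D, List.range_zero, List.map_nil, List.prod_nil]; exact Commute.one_right _
  | succ i ih =>
    rw [D_succ]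
    exact Commute.mul_right (ih (by omega)) ((bg_comm (show i + 2 ≤ j by omega)).symm)

lemma D_mul_bg {n i k : ℕ} (hin : i + 1 < n - 1) (hk : i + 2 ≤ k) :
    D n k * bg n i = bg n (i+1) * D n k := by
  induction k, hk using Nat.le_induction with
  | base =>
    have h1 : D n (i+2) = D n i * bg n i * bg n (i+1) := by
      rw [D_succ, D_succ, mul_assoc]
    rw [h1]
    have hb := bg_braid hin
    have hcd : Commute (bg n (i+1)) (D n i) := commute_bg_D (by omega)
    calc D n i * bg n i * bg n (i+1) * bg n i
        = D n i * (bg n i * bg n (i+1) * bg n i) := by group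
      _ = D n i * (bg n (i+1) * bg n i * bg n (i+1)) := by rw [hb]
      _ = (D n i * bg n (i+1)) * (bg n i * bg n (i+1)) := by group
      _ = (bg n (i+1) * D n i) * (bg n i * bg n (i+1)) := by rw [← hcd.eq]
      _ = bg n (i+1) * (D n i * bg n i * bg n (i+1)) := by group
  | succ k hk ih =>
    have hik : Commute (bg n i) (bg n k) := bg_comm (show i + 2 ≤ k by omega)
    rw [D_succ]
    calc D n k * bg n k * bg n i
        = D n k * (bg n k * bg n i) := by rw [mul_assoc]
      _ = D n k * (bg n i * bg n k) := by rw [← hik.eq]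
      _ = D n k * bg n i * bg n k := by rw [mul_assoc]
      _ = bg n (i+1) * D n k * bg n k := by rw [ih]
      _ = bg n (i+1) * (D n k * bg n k) := by rw [mul_assoc]

lemma cbraid_conj {n i : ℕ} (h : i + 1 < n - 1) :
    bg n (i+1) = cbraid n * bg n i * (cbraid n)⁻¹ := by
  have h2 := D_mul_bg h (k := n - 1) (by omega)
  unfold cbraid
  rw [h2]
  group

lemma bg_eq_conj_pow {n i : ℕ} (h : i < n - 1) :
    bg n i = (cbraid n)^i * bg n 0 * ((cbraid n)^i)⁻¹ := by
  induction i with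
  | zero => simp
  | succ i ih =>
    rw [cbraid_conj h, ih (by omega)]
    rw [pow_succ']
    group

lemma images_eq {n : ℕ} {H : Type*} [Group H] (φ : BraidGroup n →* H)
    (h01 : φ (bg n 0) = φ (bg n 1)) :
    ∀ i, i < n - 1 → φ (bg n i) = φ (bg n 0) := by
  intro i hi
  induction i with
  | zero => rfl
  | succ i ih =>
    have h1n : (1 : ℕ) < n - 1 := by omega
    rw [cbraid_conj hi, map_mul, map_mul, ih (by omega), map_inv]
    have : φ (cbraid n) * φ (bg n 0) * (φ (cbraid n))⁻¹ = φ (bg n 1) := by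
      rw [cbraid_conj (i := 0) h1n]
      simp [map_mul, map_inv]
    rw [this, ← h01]

lemma range_in_zpowers {n : ℕ} {H : Type*} [Group H] (φ : BraidGroup n →* H)
    (hall : ∀ i, i < n - 1 → φ (bg n i) = φ (bg n 0)) :
    ∀ w, φ w ∈ Subgroup.zpowers (φ (bg n 0)) := by
  intro w
  have := PresentedGroup.generated_by (braidRels (n-1))
    (Subgroup.comap φ (Subgroup.zpowers (φ (bg n 0)))) ?_ w
  · exact this
  · intro j
    have hj : (j : ℕ) < n - 1 := j.isLt
    have : braidGen j = bg n j := by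
      unfold bg
      rw [dif_pos hj]
    have h2 : φ (braidGen j) = φ (bg n 0) := by rw [this]; exact hall _ hj
    show φ (braidGen j) ∈ Subgroup.zpowers (φ (bg n 0))
    rw [h2]
    exact Subgroup.mem_zpowers _

end BraidAux

open scoped MatrixGroups

section MatrixLemmas

variable {K : Type*} [Field K]

lemma scalar_of_entries (A : Matrix (Fin 2) (Fin 2) K)
    (h01 : A 0 1 = 0) (h10 : A 1 0 = 0) (hd : A 0 0 = A 1 1) :
    A = A 0 0 • (1 : Matrix (Fin 2) (Fin 2) K) := by
  ext i j
  fin_cases i <;> fin_cases j <;>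
    simp [Matrix.one_apply, h01, h10, ← hd]

lemma span_of_commute_s9 (A B : Matrix (Fin 2) (Fin 2) K)
    (hA : ¬ (A 0 1 = 0 ∧ A 1 0 = 0 ∧ A 0 0 = A 1 1)) (h : A * B = B * A) :
    ∃ p q : K, B = p • (1 : Matrix (Fin 2) (Fin 2) K) + q • A := by
  have e00 : A 0 0 * B 0 0 + A 0 1 * B 1 0 = B 0 0 * A 0 0 + B 0 1 * A 1 0 := by
    have := congrFun (congrFun h 0) 0
    simpa [Matrix.mul_apply, Fin.sum_univ_two] using this
  have e01 : A 0 0 * B 0 1 + A 0 1 * B 1 1 = B 0 0 * A 0 1 + B 0 1 * A 1 1 := by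
    have := congrFun (congrFun h 0) 1
    simpa [Matrix.mul_apply, Fin.sum_univ_two] using this
  have e10 : A 1 0 * B 0 0 + A 1 1 * B 1 0 = B 1 0 * A 0 0 + B 1 1 * A 1 0 := by
    have := congrFun (congrFun h 1) 0
    simpa [Matrix.mul_apply, Fin.sum_univ_two] using this
  by_cases hb : A 0 1 ≠ 0
  · refine ⟨B 0 0 - A 0 0 * (B 0 1 / A 0 1), B 0 1 / A 0 1, ?_⟩
    ext i j
    fin_cases i <;> fin_cases j <;> simp [Matrix.one_apply]
    · ring
    · field_simp
    · have : A 0 1 * B 1 0 = B 0 1 * A 1 0 := by linear_combination e00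
      field_simp
      linear_combination this
    · have : A 0 1 * B 1 1 = A 0 1 * B 0 0 + B 0 1 * (A 1 1 - A 0 0) := by
        linear_combination e01
      field_simp
      linear_combination this
  · push_neg at hb
    by_cases hc : A 1 0 ≠ 0
    · refine ⟨B 0 0 - A 0 0 * (B 1 0 / A 1 0), B 1 0 / A 1 0, ?_⟩
      ext i j
      fin_cases i <;> fin_cases j <;> simp [Matrix.one_apply]
      · ring
      · have : A 1 0 * B 0 1 = B 1 0 * A 0 1 := by linear_combination -e00
        field_simp
        linear_combination this
      · field_simp
      · have : A 1 0 * B 1 1 = A 1 0 * B 0 0 + B 1 0 * (A 1 1 - A 0 0) := by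
          linear_combination -e10
        field_simp
        linear_combination this
    · push_neg at hc
      have had : A 0 0 ≠ A 1 1 := fun hd => hA ⟨hb, hc, hd⟩
      have h01 : B 0 1 = 0 := by
        have h2 : B 0 1 * (A 0 0 - A 1 1) = 0 := by
          linear_combination e01 + (B 0 0 - B 1 1) * hb
        rcases mul_eq_zero.1 h2 with h | h
        · exact h
        · exact absurd (sub_eq_zero.1 h) had
      have h10 : B 1 0 = 0 := by
        have h2 : B 1 0 * (A 0 0 - A 1 1) = 0 := by
          linear_combination -e10 + (B 0 0 - B 1 1) * hc
        rcases mul_eq_zero.1 h2 with h | h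
        · exact h
        · exact absurd (sub_eq_zero.1 h) had
      have hsub : A 0 0 - A 1 1 ≠ 0 := sub_ne_zero.2 had
      refine ⟨B 0 0 - A 0 0 * ((B 0 0 - B 1 1) / (A 0 0 - A 1 1)),
        (B 0 0 - B 1 1) / (A 0 0 - A 1 1), ?_⟩
      ext i j
      fin_cases i <;> fin_cases j <;> simp [Matrix.one_apply]
      · ring
      · rw [h01, hb]; ring
      · rw [h10, hc]; ring
      · field_simp
        ring

lemma commute_of_commute_nonscalar (A B C : Matrix (Fin 2) (Fin 2) K)
    (hA : ¬ (A 0 1 = 0 ∧ A 1 0 = 0 ∧ A 0 0 = A 1 1))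
    (hB : A * B = B * A) (hC : A * C = C * A) : B * C = C * B := by
  obtain ⟨p, q, rfl⟩ := span_of_commute_s9 A B hA hB
  obtain ⟨r, s, rfl⟩ := span_of_commute_s9 A C hA hC
  simp only [add_mul, mul_add, Matrix.smul_mul, Matrix.mul_smul, one_mul, mul_one,
    smul_smul]
  rw [mul_comm r p, mul_comm s p, mul_comm r q, mul_comm s q]
  abel

end MatrixLemmas

section SLCenter

abbrev K8 : Type := GaloisField 2 3

local notation "SL2" => Matrix.SpecialLinearGroup (Fin 2) K8

lemma K8_sq_eq_one {a : K8} (h : a * a = 1) : a = 1 := by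
  have h2 : (2 : K8) = 0 := by
    have := (CharP.cast_eq_zero_iff K8 2 2).2 dvd_rfl
    simpa using this
  have : (a - 1) * (a - 1) = 0 := by linear_combination h + (1 - a) * h2
  have := mul_self_eq_zero.1 this
  linear_combination this

end SLCenter

section SLCenter2

local notation "SL2" => Matrix.SpecialLinearGroup (Fin 2) K8

lemma SL2_center_eq_one (Z : SL2) (hZ : Z ∈ Subgroup.center SL2) : Z = 1 := by
  rw [Subgroup.mem_center_iff] at hZ
  have hE : Matrix.det !![(1:K8),1;0,1] = 1 := by simp [Matrix.det_fin_two_of]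
  have hF : Matrix.det !![(1:K8),0;1,1] = 1 := by simp [Matrix.det_fin_two_of]
  have hEZ := hZ ⟨_, hE⟩
  have hFZ := hZ ⟨_, hF⟩
  have hEZ' : !![(1:K8),1;0,1] * Z.val = Z.val * !![(1:K8),1;0,1] :=
    congrArg Subtype.val hEZ
  have hFZ' : !![(1:K8),0;1,1] * Z.val = Z.val * !![(1:K8),0;1,1] :=
    congrArg Subtype.val hFZ
  have e1 := congrFun (congrFun hEZ' 0) 0
  have e2 := congrFun (congrFun hEZ' 0) 1
  have e3 := congrFun (congrFun hFZ' 0) 0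
  simp [Matrix.mul_apply, Fin.sum_univ_two] at e1 e2 e3
  -- e1 : Z 0 0 + Z 1 0 = Z 0 0  →  Z 1 0 = 0
  have h10 : Z.val 1 0 = 0 := e1
  have h01 : Z.val 0 1 = 0 := e3
  have hd : Z.val 0 0 = Z.val 1 1 := by linear_combination -e2
  have hdet := Z.prop
  rw [Matrix.det_fin_two, h01, h10, ← hd] at hdet
  have h00 : Z.val 0 0 = 1 := K8_sq_eq_one (by linear_combination hdet)
  ext i j
  fin_cases i <;> fin_cases j <;>
    simp [h10, h01, h00, ← hd]

end SLCenter2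

section PSLLemma

local notation "SL2" => Matrix.SpecialLinearGroup (Fin 2) K8

lemma SL2_commute_lift {A X : SL2}
    (h : (QuotientGroup.mk' (Subgroup.center SL2)) A * (QuotientGroup.mk' (Subgroup.center SL2)) X
       = (QuotientGroup.mk' (Subgroup.center SL2)) X * (QuotientGroup.mk' (Subgroup.center SL2)) A) :
    A * X = X * A := by
  have h1 : (QuotientGroup.mk' (Subgroup.center SL2)) (A * X * A⁻¹ * X⁻¹) = 1 := by
    simp only [map_mul, map_inv]
    rw [mul_assoc, mul_assoc, ← mul_assoc, h]
    group
  have h2 : A * X * A⁻¹ * X⁻¹ ∈ Subgroup.center SL2 :=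
    (QuotientGroup.eq_one_iff _).1 h1
  have h3 := SL2_center_eq_one _ h2
  have : A * X = X * A := by
    have := congrArg (· * (X * A)) h3
    simpa [mul_assoc] using this
  exact this

lemma PSL2_abelian_centralizer {x a b : PSL(2, GaloisField 2 3)} (hx : x ≠ 1)
    (ha : a * x = x * a) (hb : b * x = x * b) : a * b = b * a := by
  obtain ⟨X, rfl⟩ := QuotientGroup.mk'_surjective (Subgroup.center SL2) x
  obtain ⟨A, rfl⟩ := QuotientGroup.mk'_surjective (Subgroup.center SL2) a
  obtain ⟨B, rfl⟩ := QuotientGroup.mk'_surjective (Subgroup.center SL2) b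
  have hXn : ¬ (X.val 0 1 = 0 ∧ X.val 1 0 = 0 ∧ X.val 0 0 = X.val 1 1) := by
    rintro ⟨h01, h10, hdg⟩
    apply hx
    have hXc : X ∈ Subgroup.center SL2 := by
      rw [Subgroup.mem_center_iff]
      intro g
      apply Subtype.ext
      show g.val * X.val = X.val * g.val
      have hs := scalar_of_entries X.val h01 h10 hdg
      rw [hs]
      simp
    exact (QuotientGroup.eq_one_iff X).2 hXc
  have hA : X.val * A.val = A.val * X.val := by
    have := SL2_commute_lift ha.symm
    exact congrArg Subtype.val this
  have hB : X.val * B.val = B.val * X.val := by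
    have := SL2_commute_lift hb.symm
    exact congrArg Subtype.val this
  have := commute_of_commute_nonscalar X.val A.val B.val hXn hA hB
  have hab : A * B = B * A := Subtype.ext this
  rw [← map_mul, ← map_mul, hab]

end PSLLemma

open scoped MatrixGroups
open BraidAux

theorem part_one {n : ℕ} (hn : 6 ≤ n) (f : BraidGroup n →* PSL(2, GaloisField 2 3)) :
    IsCyclic f.range := by
  have h01 : f (bg n 0) = f (bg n 1) := by
    have hb1 : (1:ℕ) < n - 1 := by omega
    by_cases h3 : f (bg n 3) = 1
    · have hp := bg_eq_conj_pow (n := n) (i := 3) (by omega)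
      have h0 : f (bg n 0) = 1 := by
        have := congrArg f hp
        rw [h3, map_mul, map_mul, map_inv] at this
        have h2 := this.symm
        -- h2 : fc^3 * f bg0 * (fc^3)⁻¹ = 1
        have := congrArg (fun z => (f ((cbraid n)^3))⁻¹ * z * (f ((cbraid n)^3))) h2
        simpa [mul_assoc] using this
      have h1 : f (bg n 1) = 1 := by
        have hc := cbraid_conj (n := n) (i := 0) hb1
        rw [hc, map_mul, map_mul, map_inv, h0]
        group
      rw [h0, h1]
    · have hc0 : f (bg n 0) * f (bg n 3) = f (bg n 3) * f (bg n 0) := by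
        rw [← map_mul, ← map_mul, (bg_comm (show 0 + 2 ≤ 3 by omega)).eq]
      have hc1 : f (bg n 1) * f (bg n 3) = f (bg n 3) * f (bg n 1) := by
        rw [← map_mul, ← map_mul, (bg_comm (show 1 + 2 ≤ 3 by omega)).eq]
      have hcomm := PSL2_abelian_centralizer h3 hc0 hc1
      have hbr : f (bg n 0) * f (bg n 1) * f (bg n 0)
          = f (bg n 1) * f (bg n 0) * f (bg n 1) := by
        rw [← map_mul, ← map_mul, ← map_mul, ← map_mul, bg_braid (show 0 + 1 < n - 1 by omega)]
      rw [hcomm] at hbr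
      -- hbr : f bg1 * f bg0 * f bg0 = f bg1 * f bg0 * f bg1
      exact mul_left_cancel hbr
  have hall := images_eq f h01
  have hzp := range_in_zpowers f hall
  refine ⟨⟨⟨f (bg n 0), ⟨bg n 0, rfl⟩⟩, ?_⟩⟩
  rintro ⟨y, w, rfl⟩
  obtain ⟨k, hk⟩ := Subgroup.mem_zpowers_iff.1 (hzp w)
  refine Subgroup.mem_zpowers_iff.2 ⟨k, ?_⟩
  apply Subtype.ext
  rw [SubgroupClass.coe_zpow]
  exact hk

section GroupHelpers

variable {G : Type*} [Group G]

lemma mem_commutator_of_commutatorElement (x y : G) : x * y * x⁻¹ * y⁻¹ ∈ commutator G := by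
  rw [commutator_def]
  exact Subgroup.commutator_mem_commutator (Subgroup.mem_top x) (Subgroup.mem_top y)

lemma prod_conj_mem_commutator (t : G) :
    ∀ L : List G, (∀ x ∈ L, ∃ w, x = w * t * w⁻¹) →
      L.prod * (t ^ L.length)⁻¹ ∈ commutator G := by
  intro L
  induction L with
  | nil => intro _; simp only [List.prod_nil, List.length_nil, pow_zero, inv_one, mul_one]
           exact Subgroup.one_mem _
  | cons a L ih =>
    intro hmem
    obtain ⟨w, hw⟩ := hmem a List.mem_cons_self
    have h1 : a * t⁻¹ ∈ commutator G := by
      rw [hw]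
      have := mem_commutator_of_commutatorElement w t
      simpa [mul_assoc] using this
    have h2 := ih (fun x hx => hmem x (List.mem_cons_of_mem _ hx))
    have h3 : t * (L.prod * (t ^ L.length)⁻¹) * t⁻¹ ∈ commutator G :=
      Subgroup.Normal.conj_mem (by infer_instance) _ h2 t
    have key : (a :: L).prod * (t ^ (a :: L).length)⁻¹
        = (a * t⁻¹) * (t * (L.prod * (t ^ L.length)⁻¹) * t⁻¹) := by
      rw [List.prod_cons, List.length_cons, pow_succ]
      group
    rw [key]
    exact Subgroup.mul_mem _ h1 h3

lemma ballast_aux {s r z : G} (hzs : Commute z s) (hzr : Commute z r) :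
    s * z⁻¹ * (r * z⁻¹) * (s * z⁻¹) = s * r * s * (z⁻¹ * z⁻¹ * z⁻¹) := by
  have e1 := hzs.inv_left.eq
  have e2 := hzr.inv_left.eq
  calc s * z⁻¹ * (r * z⁻¹) * (s * z⁻¹)
      = s * (z⁻¹ * r) * (z⁻¹ * s) * z⁻¹ := by group
    _ = s * (r * z⁻¹) * (s * z⁻¹) * z⁻¹ := by rw [e1, e2]
    _ = s * r * (z⁻¹ * s) * (z⁻¹ * z⁻¹) := by group
    _ = s * r * (s * z⁻¹) * (z⁻¹ * z⁻¹) := by rw [e1]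
    _ = s * r * s * (z⁻¹ * z⁻¹ * z⁻¹) := by group

lemma ballast_braid {s r z : G} (hzs : Commute z s) (hzr : Commute z r)
    (hbr : s * r * s = r * s * r) :
    s * z⁻¹ * (r * z⁻¹) * (s * z⁻¹) = r * z⁻¹ * (s * z⁻¹) * (r * z⁻¹) := by
  rw [ballast_aux hzs hzr, ballast_aux hzr hzs, hbr]

end GroupHelpers

namespace BraidAux

/-- The element `σ₁ σ₃⁻¹`. -/
def uu (n : ℕ) : BraidGroup n := bg n 0 * (bg n 2)⁻¹

lemma bg_mul_inv_mem {n : ℕ} (i : ℕ) (hi : i < n - 1) :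
    bg n i * (bg n 0)⁻¹ ∈ commutator (BraidGroup n) := by
  rw [bg_eq_conj_pow hi]
  exact mem_commutator_of_commutatorElement _ _

lemma uu_mem {n : ℕ} (h : 2 < n - 1) : uu n ∈ commutator (BraidGroup n) := by
  unfold uu
  rw [bg_eq_conj_pow h]
  have heq : bg n 0 * ((cbraid n)^2 * bg n 0 * ((cbraid n)^2)⁻¹)⁻¹
      = bg n 0 * (cbraid n)^2 * (bg n 0)⁻¹ * ((cbraid n)^2)⁻¹ := by group
  rw [heq]
  exact mem_commutator_of_commutatorElement _ _

lemma cbraid_eq_prod (n : ℕ) : cbraid n = ((List.range (n-1)).map (bg n)).prod := rfl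

lemma gamma_mem {n : ℕ} (hn : 8 ≤ n) :
    (cbraid n)^4 * ((bg n 0)^(4*(n-1)))⁻¹ ∈ commutator (BraidGroup n) := by
  set J : List (BraidGroup n) := (List.range (n-1)).map (bg n) with hJ
  have hprod : (J ++ J ++ J ++ J).prod = (cbraid n)^4 := by
    rw [List.prod_append, List.prod_append, List.prod_append, ← cbraid_eq_prod]
    norm_num [pow_succ]
  have hlen : (J ++ J ++ J ++ J).length = 4*(n-1) := by
    simp only [List.length_append, hJ, List.length_map, List.length_range]
    omega
  have hconj : ∀ x ∈ J ++ J ++ J ++ J, ∃ w, x = w * (bg n 0) * w⁻¹ := by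
    intro x hx
    have hxJ : x ∈ J := by
      simp only [List.mem_append] at hx
      tauto
    rw [hJ] at hxJ
    obtain ⟨i, hi, rfl⟩ := List.mem_map.1 hxJ
    rw [List.mem_range] at hi
    exact ⟨(cbraid n)^i, bg_eq_conj_pow hi⟩
  have := prod_conj_mem_commutator (bg n 0) (J ++ J ++ J ++ J) hconj
  rw [hprod, hlen] at this
  exact this

lemma gamma_conj {n : ℕ} (hn : 8 ≤ n) :
    ((cbraid n)^4 * ((bg n 0)^(4*(n-1)))⁻¹) * uu n * ((cbraid n)^4 * ((bg n 0)^(4*(n-1)))⁻¹)⁻¹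
      = bg n 4 * (bg n 6)⁻¹ := by
  have c02 : Commute (bg n 0) (bg n 2) := bg_comm (by omega)
  have h0u : Commute ((bg n 0)^(4*(n-1))) (uu n) :=
    ((Commute.refl (bg n 0)).mul_right c02.inv_right).pow_left _
  have hW : ((bg n 0)^(4*(n-1)))⁻¹ * uu n * (((bg n 0)^(4*(n-1)))⁻¹)⁻¹ = uu n := by
    rw [h0u.inv_left.eq]
    group
  have key : ((cbraid n)^4 * ((bg n 0)^(4*(n-1)))⁻¹) * uu n * ((cbraid n)^4 * ((bg n 0)^(4*(n-1)))⁻¹)⁻¹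
      = (cbraid n)^4 * (((bg n 0)^(4*(n-1)))⁻¹ * uu n * (((bg n 0)^(4*(n-1)))⁻¹)⁻¹) * ((cbraid n)^4)⁻¹ := by
    group
  rw [key, hW]
  unfold uu
  rw [bg_eq_conj_pow (show 4 < n - 1 by omega), bg_eq_conj_pow (show 6 < n - 1 by omega),
    bg_eq_conj_pow (show 2 < n - 1 by omega)]
  group

end BraidAux

open BraidAux in
theorem braid_core {n : ℕ} (hn : 8 ≤ n)
    (f : ↥(commutator (BraidGroup n)) →* PSL(2, GaloisField 2 3))
    (hu : uu n ∈ commutator (BraidGroup n)) :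
    f ⟨uu n, hu⟩ = 1 := by
  set U : ↥(commutator (BraidGroup n)) := ⟨uu n, hu⟩ with hU
  by_cases hx : f U = 1
  · exact hx
  exfalso
  -- commuting generators
  have c02 : Commute (bg n 0) (bg n 2) := bg_comm (by omega)
  have c04 : Commute (bg n 0) (bg n 4) := bg_comm (by omega)
  have c05 : Commute (bg n 0) (bg n 5) := bg_comm (by omega)
  have c06 : Commute (bg n 0) (bg n 6) := bg_comm (by omega)
  have c24 : Commute (bg n 2) (bg n 4) := bg_comm (by omega)
  have c25 : Commute (bg n 2) (bg n 5) := bg_comm (by omega)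
  have c26 : Commute (bg n 2) (bg n 6) := bg_comm (by omega)
  set A : ↥(commutator (BraidGroup n)) := ⟨bg n 4 * (bg n 0)⁻¹, bg_mul_inv_mem 4 (by omega)⟩ with hA
  set B : ↥(commutator (BraidGroup n)) := ⟨bg n 5 * (bg n 0)⁻¹, bg_mul_inv_mem 5 (by omega)⟩ with hB
  set E : ↥(commutator (BraidGroup n)) := ⟨bg n 6 * (bg n 0)⁻¹, bg_mul_inv_mem 6 (by omega)⟩ with hE
  have key : ∀ P Q : ↥(commutator (BraidGroup n)), (P : BraidGroup n) * Q = (Q : BraidGroup n) * P →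
      f P * f Q = f Q * f P := by
    intro P Q h
    rw [← map_mul, ← map_mul]
    congr 1
    exact Subtype.ext h
  -- braid-group-level commutation of uu with the ballasted generators
  have hcomm : ∀ i : ℕ, Commute (bg n 0) (bg n i) → Commute (bg n 2) (bg n i) →
      (uu n) * (bg n i * (bg n 0)⁻¹) = (bg n i * (bg n 0)⁻¹) * (uu n) := by
    intro i h0 h2
    have h1 : Commute (bg n 0) (bg n i * (bg n 0)⁻¹) :=
      h0.mul_right (Commute.refl _).inv_right
    have h3 : Commute (bg n 2)⁻¹ (bg n i * (bg n 0)⁻¹) :=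
      (h2.mul_right c02.symm.inv_right).inv_left
    exact (h1.mul_left h3).eq
  have hUA : f U * f A = f A * f U := key U A (hcomm 4 c04 c24)
  have hUB : f U * f B = f B * f U := key U B (hcomm 5 c05 c25)
  have hUE : f U * f E = f E * f U := key U E (hcomm 6 c06 c26)
  have hAB : f A * f B = f B * f A :=
    PSL2_abelian_centralizer hx hUA.symm hUB.symm
  have hBE : f B * f E = f E * f B :=
    PSL2_abelian_centralizer hx hUB.symm hUE.symm
  -- braid relations for the ballasted generators
  have hABA : f A * f B * f A = f B * f A * f B := by
    rw [← map_mul, ← map_mul, ← map_mul, ← map_mul]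
    congr 1
    exact Subtype.ext (ballast_braid c04 c05 (bg_braid (by omega)))
  have hBEB : f B * f E * f B = f E * f B * f E := by
    rw [← map_mul, ← map_mul, ← map_mul, ← map_mul]
    congr 1
    exact Subtype.ext (ballast_braid c05 c06 (bg_braid (by omega)))
  rw [hAB] at hABA
  have hfAB : f A = f B := mul_left_cancel hABA
  rw [hBE] at hBEB
  have hfBE : f B = f E := mul_left_cancel hBEB
  -- hence f (σ₅ σ₇⁻¹) = 1
  have hAE1 : f (A * E⁻¹) = 1 := by
    rw [map_mul, map_inv, hfAB, hfBE]
    group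
  -- conjugate uu into σ₅ σ₇⁻¹ inside the commutator subgroup
  set Γ : ↥(commutator (BraidGroup n)) := ⟨(cbraid n)^4 * ((bg n 0)^(4*(n-1)))⁻¹, gamma_mem hn⟩ with hΓ
  have hconj : Γ * U * Γ⁻¹ = A * E⁻¹ := by
    apply Subtype.ext
    show ((cbraid n)^4 * ((bg n 0)^(4*(n-1)))⁻¹) * uu n *
        ((cbraid n)^4 * ((bg n 0)^(4*(n-1)))⁻¹)⁻¹
        = (bg n 4 * (bg n 0)⁻¹) * (bg n 6 * (bg n 0)⁻¹)⁻¹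
    rw [gamma_conj hn]
    group
  apply hx
  have h1 : f (Γ * U * Γ⁻¹) = 1 := by rw [hconj]; exact hAE1
  rw [map_mul, map_mul, map_inv] at h1
  have h2 := congrArg (fun z => (f Γ)⁻¹ * z * (f Γ)) h1
  simpa [mul_assoc] using h2

open BraidAux in
open scoped commutatorElement in
theorem part_two {n : ℕ} (hn : 8 ≤ n)
    (f : ↥(commutator (BraidGroup n)) →* PSL(2, GaloisField 2 3)) : f = 1 := by
  have huu : uu n ∈ commutator (BraidGroup n) := uu_mem (by omega)
  -- Step 1: the commutator subgroup is contained in the normal closure of {uu n}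
  have hCN : commutator (BraidGroup n) ≤ Subgroup.normalClosure {uu n} := by
    set π := QuotientGroup.mk' (Subgroup.normalClosure ({uu n} : Set (BraidGroup n))) with hπ
    have hu1 : π (uu n) = 1 :=
      (QuotientGroup.eq_one_iff _).2 (Subgroup.subset_normalClosure (Set.mem_singleton _))
    have hq02 : π (bg n 0) = π (bg n 2) := by
      have hu1 : π (bg n 0 * (bg n 2)⁻¹) = 1 := hu1
      rw [map_mul, map_inv] at hu1
      exact mul_inv_eq_one.1 hu1
    have hq31 : π (bg n 3) = π (bg n 1) := by
      rw [cbraid_conj (show 2 + 1 < n - 1 by omega), cbraid_conj (show 0 + 1 < n - 1 by omega)]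
      simp only [map_mul, map_inv]
      rw [hq02]
    have hq03 : π (bg n 0) = π (bg n 3) := by
      have hbr : π (bg n 2) * π (bg n 3) * π (bg n 2)
          = π (bg n 3) * π (bg n 2) * π (bg n 3) := by
        rw [← map_mul, ← map_mul, ← map_mul, ← map_mul, bg_braid (show 2 + 1 < n - 1 by omega)]
      rw [← hq02] at hbr
      have hcm : π (bg n 0) * π (bg n 3) = π (bg n 3) * π (bg n 0) := by
        rw [← map_mul, ← map_mul, (bg_comm (show 0 + 2 ≤ 3 by omega)).eq]
      rw [hcm] at hbr
      exact mul_left_cancel hbr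
    have h01 : π (bg n 0) = π (bg n 1) := hq03.trans hq31
    have hall := images_eq π h01
    have hzp := range_in_zpowers π hall
    have habelian : ∀ g h : BraidGroup n, ⁅g, h⁆ ∈ Subgroup.normalClosure {uu n} := by
      intro g h
      apply (QuotientGroup.eq_one_iff _).1
      show π ⁅g, h⁆ = 1
      rw [map_commutatorElement]
      apply commutatorElement_eq_one_iff_commute.2
      obtain ⟨k, hk⟩ := Subgroup.mem_zpowers_iff.1 (hzp g)
      obtain ⟨l, hl⟩ := Subgroup.mem_zpowers_iff.1 (hzp h)
      rw [← hk, ← hl]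
      exact Commute.zpow_zpow (Commute.refl _) k l
    rw [commutator_def]
    exact Subgroup.commutator_le.2 fun g _ h _ => habelian g h
  -- Step 2: the normal closure is killed by f
  have hK : ∀ v ∈ Group.conjugatesOfSet ({uu n} : Set (BraidGroup n)),
      v ∈ Subgroup.map (commutator (BraidGroup n)).subtype f.ker := by
    intro v hv
    obtain ⟨a, ha, hconj⟩ := Group.mem_conjugatesOfSet_iff.1 hv
    rw [Set.mem_singleton_iff] at ha
    subst ha
    obtain ⟨w, hw⟩ := isConj_iff.1 hconj
    have hvC : v ∈ commutator (BraidGroup n) := by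
      rw [← hw]
      exact Subgroup.Normal.conj_mem (by infer_instance) _ huu w
    refine ⟨⟨v, hvC⟩, ?_, rfl⟩
    show f ⟨v, hvC⟩ = 1
    have hcore := braid_core hn (f.comp (MulAut.conjNormal w).toMonoidHom) huu
    rw [MonoidHom.comp_apply] at hcore
    have heq : (MulAut.conjNormal w).toMonoidHom ⟨uu n, huu⟩
        = (⟨v, hvC⟩ : ↥(commutator (BraidGroup n))) := by
      apply Subtype.ext
      show (((MulAut.conjNormal w) (⟨uu n, huu⟩ : ↥(commutator (BraidGroup n)))) : BraidGroup n) = v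
      rw [MulAut.conjNormal_apply]
      exact hw
    rw [heq] at hcore
    exact hcore
  have hNK : Subgroup.normalClosure ({uu n} : Set (BraidGroup n))
      ≤ Subgroup.map (commutator (BraidGroup n)).subtype f.ker := by
    show Subgroup.closure _ ≤ _
    exact (Subgroup.closure_le _).2 hK
  -- Step 3: conclude
  ext y
  rcases y with ⟨g, hg⟩
  obtain ⟨z, hz, hzg⟩ := hNK (hCN hg)
  have hy : (⟨g, hg⟩ : ↥(commutator (BraidGroup n))) = z := Subtype.ext hzg.symm
  rw [hy]
  exact hz


open scoped MatrixGroups in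
/-- For the field with `8` elements: every homomorphism `B_n → PSL(2, 𝔽₈)` with `n ≥ 6` has
cyclic image, and every homomorphism `B_n' → PSL(2, 𝔽₈)` with `n ≥ 8` is trivial. -/
theorem braid_to_PSL2_F8 :
    (∀ n : ℕ, 6 ≤ n → ∀ f : BraidGroup n →* PSL(2, GaloisField 2 3), IsCyclic f.range) ∧
    (∀ n : ℕ, 8 ≤ n → ∀ f : commutator (BraidGroup n) →* PSL(2, GaloisField 2 3), f = 1) :=
  ⟨fun _ hn f => part_one hn f, fun _ hn f => part_two hn f⟩
end

section
/- Let n ≥ 1, let G be a group, and let T be a totally symmetric subset of G with exactly n elements, each of finite order. Let p be the minimal positive integer such that t₁^p = t₂^p for all t₁, t₂ ∈ T. Then the subgroup of G generated by T is finite and has order at least p^{n−1}. -/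
private lemma zpow_congr_of_dvd {H : Type*} [Group H] (x : H) {D a b : ℤ}
    (hD : x ^ D = 1) (h : D ∣ a - b) : x ^ a = x ^ b := by
  obtain ⟨k, hk⟩ := h
  have ha : a = b + D * k := by linarith
  rw [ha, zpow_add, zpow_mul, hD, one_zpow, mul_one]

private lemma exists_perm_pair {n : ℕ} {i j k l : Fin n} (hij : i ≠ j) (hkl : k ≠ l) :
    ∃ σ : Equiv.Perm (Fin n), σ i = k ∧ σ j = l := by
  classical
  set σ₁ := Equiv.swap i k with hσ₁
  have h1 : σ₁ i = k := Equiv.swap_apply_left i k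
  have hj' : σ₁ j ≠ k := by
    rw [← h1]; exact fun h => hij (σ₁.injective h).symm
  refine ⟨σ₁.trans (Equiv.swap (σ₁ j) l), ?_, ?_⟩
  · simp only [Equiv.trans_apply, h1]
    exact Equiv.swap_apply_of_ne_of_ne (Ne.symm hj') hkl
  · simp only [Equiv.trans_apply]
    exact Equiv.swap_apply_left _ _

/-- If `T` is a totally symmetric set with exactly `n ≥ 1` elements, each of finite order, and
`p` is the minimal positive integer with `t₁^p = t₂^p` for all `t₁, t₂ ∈ T`, then the subgroup
generated by `T` is finite of order at least `p^(n-1)`. -/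
theorem closure_of_totallySymmetric_card_ge
    {G : Type*} [Group G] (n : ℕ) (hn : 1 ≤ n) (T : Set G)
    (hT : IsTotallySymmetric T) (hfin : T.Finite) (hcard : T.ncard = n)
    (hord : ∀ t ∈ T, IsOfFinOrder t)
    (p : ℕ) (hp : 0 < p)
    (hpow : ∀ t₁ ∈ T, ∀ t₂ ∈ T, t₁ ^ p = t₂ ^ p)
    (hmin : ∀ q : ℕ, 0 < q → (∀ t₁ ∈ T, ∀ t₂ ∈ T, t₁ ^ q = t₂ ^ q) → p ≤ q) :
    Finite (Subgroup.closure T) ∧ Nat.card (Subgroup.closure T) ≥ p ^ (n - 1) := by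
  classical
  obtain ⟨m, rfl⟩ : ∃ m, n = m + 1 := ⟨n - 1, (Nat.succ_pred_eq_of_pos hn).symm⟩
  haveI hfinT : Finite T := hfin.to_subtype
  have hcardT : Nat.card T = m + 1 := by rw [Nat.card_coe_set_eq, hcard]
  let e : T ≃ Fin (m + 1) := Finite.equivFinOfCardEq hcardT
  set t : Fin (m + 1) → G := fun i => ((e.symm i : T) : G) with ht
  have htmem : ∀ i, t i ∈ T := fun i => (e.symm i).2
  have htsurj : ∀ x ∈ T, ∃ i, t i = x := fun x hx => ⟨e ⟨x, hx⟩, by simp [ht]⟩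
  -- realization of permutations by conjugation
  have hperm : ∀ σ : Equiv.Perm (Fin (m + 1)), ∃ h : G, ∀ i, h * t i * h⁻¹ = t (σ i) := by
    intro σ
    obtain ⟨h, hh⟩ := hT.2 (e.trans (σ.trans e.symm))
    refine ⟨h, fun i => ?_⟩
    have := hh (e.symm i)
    simpa [ht, Equiv.trans_apply] using this
  set H := Subgroup.closure T with hH
  letI : CommGroup H := Subgroup.closureCommGroupOfComm hT.1
  have htmemH : ∀ i, t i ∈ H := fun i => Subgroup.subset_closure (htmem i)
  set t' : Fin (m + 1) → H := fun i => ⟨t i, htmemH i⟩ with ht'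
  set f : (Fin (m + 1) → ℤ) → H := fun a => ∏ i, t' i ^ a i with hf
  have f_add : ∀ a b, f (a + b) = f a * f b := by
    intro a b
    simp only [hf, Pi.add_apply, zpow_add, Finset.prod_mul_distrib]
  have f_zero : f 0 = 1 := by simp [hf]
  have f_neg : ∀ a, f (-a) = (f a)⁻¹ := by
    intro a
    simp only [hf, Pi.neg_apply, zpow_neg, Finset.prod_inv_distrib]
  have f_single : ∀ (i : Fin (m + 1)) (c : ℤ), f (Pi.single i c) = t' i ^ c := by
    intro i c
    simp only [hf]
    rw [Finset.prod_eq_single i]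
    · simp
    · intro j _ hji; simp [Pi.single_eq_of_ne hji]
    · simp
  have f_surj : ∀ h : H, ∃ a, f a = h := by
    rintro ⟨x, hx⟩
    refine Subgroup.closure_induction
      (p := fun x hx => ∃ a : Fin (m + 1) → ℤ, f a = ⟨x, hx⟩) ?_ ?_ ?_ ?_ hx
    · intro x hx
      obtain ⟨i, rfl⟩ := htsurj x hx
      exact ⟨Pi.single i 1, by rw [f_single, zpow_one]⟩
    · exact ⟨0, by rw [f_zero]; rfl⟩
    · rintro x y hx hy ⟨a, ha⟩ ⟨b, hb⟩
      exact ⟨a + b, by rw [f_add, ha, hb]; rfl⟩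
    · rintro x hx ⟨a, ha⟩
      exact ⟨-a, by rw [f_neg, ha]; rfl⟩
  -- permutation invariance of the kernel
  have f_perm : ∀ (σ : Equiv.Perm (Fin (m + 1))) (a : Fin (m + 1) → ℤ),
      f a = 1 → f (a ∘ σ) = 1 := by
    intro σ a hfa
    obtain ⟨h, hh⟩ := hperm σ.symm
    set c0 : G →* G := (MulAut.conj h).toMonoidHom with hc0
    have hc0t : ∀ i, c0 (t i) = t (σ.symm i) := by
      intro i
      have : c0 (t i) = h * t i * h⁻¹ := by simp [hc0]
      rw [this, hh i]
    have hc0H : ∀ x ∈ H, c0 x ∈ H := by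
      intro x hx
      refine Subgroup.closure_induction (p := fun y _ => c0 y ∈ H) ?_ ?_ ?_ ?_ hx
      · intro y hy
        obtain ⟨i, rfl⟩ := htsurj y hy
        rw [hc0t i]
        exact htmemH _
      · show c0 1 ∈ H
        rw [map_one]; exact H.one_mem
      · intro y z _ _ hy hz
        show c0 (y * z) ∈ H
        rw [map_mul]; exact H.mul_mem hy hz
      · intro y _ hy
        show c0 y⁻¹ ∈ H
        rw [map_inv]; exact H.inv_mem hy
    set c : H →* H := (c0.comp H.subtype).codRestrict H (fun x => hc0H x x.2) with hc
    have hct : ∀ i, c (t' i) = t' (σ.symm i) := by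
      intro i
      apply Subtype.ext
      show c0 (t i) = t (σ.symm i)
      exact hc0t i
    have key : c (f a) = f (a ∘ σ) := by
      simp only [hf]
      rw [map_prod]
      simp only [map_zpow, hct]
      have := Equiv.prod_comp σ.symm (fun j => t' j ^ a (σ j))
      simp only [Equiv.apply_symm_apply] at this
      simpa [Function.comp] using this
    rw [← key, hfa, map_one]
  -- all-pairs symmetry for power relations
  have zpow_pair : ∀ (c : ℤ) (i j : Fin (m + 1)), i ≠ j → t i ^ c = t j ^ c →
      ∀ k l, t k ^ c = t l ^ c := by
    intro c i j hij hc k l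
    by_cases hkl : k = l
    · rw [hkl]
    obtain ⟨σ, hσi, hσj⟩ := exists_perm_pair hij hkl
    obtain ⟨h, hh⟩ := hperm σ
    have h1 : ∀ i', h * t i' * h⁻¹ = t (σ i') := hh
    have h2 : (MulAut.conj h) (t i ^ c) = (MulAut.conj h) (t j ^ c) := by rw [hc]
    rw [map_zpow, map_zpow] at h2
    have hci : (MulAut.conj h) (t i) = t k := by rw [MulAut.conj_apply, h1 i, hσi]
    have hcj : (MulAut.conj h) (t j) = t l := by rw [MulAut.conj_apply, h1 j, hσj]
    rwa [hci, hcj] at h2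
  -- minimality gives divisibility
  have zpow_dvd : ∀ c : ℤ, (∀ k l, t k ^ c = t l ^ c) → (p : ℤ) ∣ c := by
    intro c hc
    have hpz : ∀ k l : Fin (m + 1), t k ^ (p : ℤ) = t l ^ (p : ℤ) := by
      intro k l
      rw [zpow_natCast, zpow_natCast]
      exact hpow _ (htmem k) _ (htmem l)
    set r := c % (p : ℤ) with hr
    have hpne : (p : ℤ) ≠ 0 := by exact_mod_cast hp.ne'
    have hr0 : 0 ≤ r := Int.emod_nonneg c hpne
    have hrlt : r < p := Int.emod_lt_of_pos c (by exact_mod_cast hp)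
    have hrc : ∀ k l, t k ^ r = t l ^ r := by
      intro k l
      have hdef : r = c - (p : ℤ) * (c / p) := by rw [hr, Int.emod_def]
      rw [hdef, zpow_sub, zpow_sub, zpow_mul, zpow_mul, hc k l, hpz k l]
    rcases eq_or_ne r 0 with h0 | h0
    · exact Int.dvd_of_emod_eq_zero (by rw [← hr]; exact h0)
    · exfalso
      set q := r.toNat with hq
      have hqr : (q : ℤ) = r := Int.toNat_of_nonneg hr0
      have hq0 : 0 < q := by omega
      have hqlt : q < p := by omega
      have hqpow : ∀ t₁ ∈ T, ∀ t₂ ∈ T, t₁ ^ q = t₂ ^ q := by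
        intro t₁ h₁ t₂ h₂
        obtain ⟨i, rfl⟩ := htsurj t₁ h₁
        obtain ⟨j, rfl⟩ := htsurj t₂ h₂
        have := hrc i j
        rw [← hqr, zpow_natCast, zpow_natCast] at this
        exact this
      have := hmin q hq0 hqpow
      omega
  -- the key divisibility lemma
  have key_dvd : ∀ a : Fin (m + 1) → ℤ, f a = 1 → ∀ i j, (p : ℤ) ∣ a i - a j := by
    intro a hfa i j
    by_cases hij : i = j
    · simp [hij]
    have hswap := f_perm (Equiv.swap i j) a hfa
    have h1 : f (a - a ∘ (Equiv.swap i j)) = 1 := by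
      have hsa : a - a ∘ ⇑(Equiv.swap i j) = a + -(a ∘ ⇑(Equiv.swap i j)) := by
        funext k; simp [sub_eq_add_neg]
      rw [hsa, f_add, f_neg, hswap, hfa]
      simp
    have h2 : a - a ∘ ⇑(Equiv.swap i j)
        = Pi.single i (a i - a j) + Pi.single j (-(a i - a j)) := by
      funext k
      simp only [Pi.sub_apply, Function.comp_apply, Pi.add_apply, Pi.single_apply]
      by_cases hk : k = i
      · subst hk
        rw [Equiv.swap_apply_left]
        simp [hij]
      · by_cases hk2 : k = j
        · subst hk2
          rw [Equiv.swap_apply_right]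
          simp [hk]
        · rw [Equiv.swap_apply_of_ne_of_ne hk hk2]
          simp [hk, hk2]
    rw [h2, f_add, f_single, f_single, zpow_neg] at h1
    have h3 : t' i ^ (a i - a j) = t' j ^ (a i - a j) := mul_inv_eq_one.mp h1
    have h4 : t i ^ (a i - a j) = t j ^ (a i - a j) := by
      have := congrArg (Subtype.val) h3
      simpa using this
    exact zpow_dvd _ (zpow_pair _ i j hij h4)
  -- finiteness
  set d : ℕ := ∏ i, orderOf (t i) with hd
  have hd0 : 0 < d := Finset.prod_pos fun i _ => (hord _ (htmem i)).orderOf_pos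
  haveI : NeZero d := ⟨hd0.ne'⟩
  have htd : ∀ i, t' i ^ (d : ℤ) = 1 := by
    intro i
    have hdvd : orderOf (t i) ∣ d := Finset.dvd_prod_of_mem _ (Finset.mem_univ i)
    have h1 : t i ^ d = 1 := orderOf_dvd_iff_pow_eq_one.mp hdvd
    rw [zpow_natCast]
    apply Subtype.ext
    push_cast
    exact h1
  have gsurj : Function.Surjective
      (fun b : Fin (m + 1) → ZMod d => f (fun i => ((b i).val : ℤ))) := by
    intro h
    obtain ⟨a, ha⟩ := f_surj h
    refine ⟨fun i => ((a i : ℤ) : ZMod d), ?_⟩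
    rw [← ha]
    simp only [hf]
    refine Finset.prod_congr rfl fun i _ => ?_
    refine zpow_congr_of_dvd (t' i) (htd i) ?_
    rw [← ZMod.intCast_zmod_eq_zero_iff_dvd]
    push_cast
    rw [ZMod.natCast_val, ZMod.cast_id]
    ring
  have finH : Finite H := Finite.of_surjective _ gsurj
  haveI : NeZero p := ⟨hp.ne'⟩
  -- the surjection onto (ZMod p)^m
  have psi_surj : ∃ ψ : H → (Fin m → ZMod p), Function.Surjective ψ := by
    choose rep hrep using f_surj
    refine ⟨fun h k => (((rep h) k.castSucc - (rep h) k.succ : ℤ) : ZMod p), ?_⟩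
    intro cvec
    choose z hz using fun k => ZMod.intCast_surjective (cvec k)
    set a : Fin (m + 1) → ℤ :=
      fun jj => ∑ k ∈ Finset.univ.filter (fun k : Fin m => (jj : ℕ) ≤ (k : ℕ)), z k with ha
    refine ⟨f a, ?_⟩
    funext k
    have hba : f (rep (f a) - a) = 1 := by
      have hsa : rep (f a) - a = rep (f a) + -a := by funext; simp [sub_eq_add_neg]
      rw [hsa, f_add, f_neg, hrep (f a)]
      simp
    have hdvd : (p : ℤ) ∣ (rep (f a) k.castSucc - rep (f a) k.succ)
        - (a k.castSucc - a k.succ) := by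
      have hkd := key_dvd _ hba k.castSucc k.succ
      simp only [Pi.sub_apply] at hkd
      convert hkd using 1
      ring
    have hsub : a k.castSucc - a k.succ = z k := by
      simp only [ha]
      have hset : Finset.univ.filter (fun k' : Fin m => ((k.castSucc : Fin (m+1)) : ℕ) ≤ (k' : ℕ))
          = insert k (Finset.univ.filter (fun k' : Fin m => ((k.succ : Fin (m+1)) : ℕ) ≤ (k' : ℕ))) := by
        ext x
        simp only [Finset.mem_filter, Finset.mem_univ, true_and, Finset.mem_insert,
          Fin.coe_castSucc, Fin.val_succ, Fin.ext_iff]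
        omega
      rw [hset, Finset.sum_insert (by simp)]
      ring
    have heq : (((rep (f a)) k.castSucc - (rep (f a)) k.succ : ℤ) : ZMod p)
        = ((a k.castSucc - a k.succ : ℤ) : ZMod p) := by
      rw [← sub_eq_zero, ← Int.cast_sub, ZMod.intCast_zmod_eq_zero_iff_dvd]
      exact hdvd
    show (((rep (f a)) k.castSucc - (rep (f a)) k.succ : ℤ) : ZMod p) = cvec k
    rw [heq, hsub, hz]
  obtain ⟨ψ, hψ⟩ := psi_surj
  refine ⟨finH, ?_⟩
  have hle := Nat.card_le_card_of_surjective ψ hψ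
  have hcardt : Nat.card (Fin m → ZMod p) = p ^ m := by
    rw [Nat.card_fun, Nat.card_zmod]
    simp [Nat.card_eq_fintype_card]
  simp only [Nat.add_sub_cancel]
  rw [← hcardt]
  exact hle
end

section
/- Let n ≥ 5 and let G be a finite non-cyclic group admitting a surjective group homomorphism f from the braid group B_n onto G, and suppose G has minimal order among all such quotients: for every finite non-cyclic group G' admitting a surjective homomorphism from B_n, |G| ≤ |G'|. Let m be the order of the element f(σ_1) in G, and let p be the minimal positive integer such that f(σ_1)^p = f(σ_{2i−1})^p for all 1 ≤ i ≤ ⌊n/2⌋. Then p = m. -/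
lemma braid_rel_one {m : ℕ} {r : FreeGroup (Fin m)} (hr : r ∈ braidRels m) :
    PresentedGroup.mk (braidRels m) r = 1 :=
  (QuotientGroup.eq_one_iff r).mpr (Subgroup.subset_normalClosure hr)

lemma braid_braid {n : ℕ} (i j : Fin (n - 1)) (hij : (j : ℕ) = (i : ℕ) + 1) :
    braidGen (n := n) i * braidGen j * braidGen i
      = braidGen j * braidGen i * braidGen j := by
  have h := braid_rel_one (m := n - 1) (Or.inr ⟨i, j, hij, rfl⟩)
  have h2 : braidGen (n := n) i * braidGen j * braidGen i *
      (braidGen j * braidGen i * braidGen j)⁻¹ = 1 := by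
    exact h
  exact mul_inv_eq_one.mp h2

lemma braid_comm {n : ℕ} (i j : Fin (n - 1)) (hij : (i : ℕ) + 2 ≤ (j : ℕ)) :
    braidGen (n := n) i * braidGen j = braidGen j * braidGen i := by
  have h := braid_rel_one (m := n - 1) (Or.inl ⟨i, j, hij, rfl⟩)
  have h2 : braidGen (n := n) i * braidGen j * (braidGen i)⁻¹ * (braidGen j)⁻¹ = 1 := by
    exact h
  exact mul_inv_eq_iff_eq_mul.mp (mul_inv_eq_one.mp h2)

lemma braid_gen_induction {n : ℕ} (H : Subgroup (BraidGroup n))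
    (h : ∀ i : Fin (n - 1), braidGen i ∈ H) (x : BraidGroup n) : x ∈ H :=
  PresentedGroup.generated_by _ H h x

/-- Key algebraic lemma: if `a,b,c,e` satisfy the relevant braid relations and
`a^p = c^p`, then `a^p = b^p = e^p`. -/
lemma power_eq_aux {G : Type*} [Group G] (a b c e : G) (p : ℕ)
    (hba : a * b * a = b * a * b) (hec : c * e * c = e * c * e)
    (hac : a * c = c * a) (hae : a * e = e * a) (hbe : b * e = e * b)
    (hz : a ^ p = c ^ p) : a ^ p = b ^ p ∧ a ^ p = e ^ p := by
  have h1 : (a * b) * a = b * (a * b) := by rw [← mul_assoc, hba, mul_assoc]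
  have h2 : (c * e) * c = e * (c * e) := by rw [← mul_assoc, hec, mul_assoc]
  have hda : ((a * b) * (c * e)) * a = b * ((a * b) * (c * e)) := by
    have hcea : (c * e) * a = a * (c * e) := by
      rw [mul_assoc, ← hae, ← mul_assoc, ← hac, mul_assoc]
    calc ((a * b) * (c * e)) * a = (a * b) * ((c * e) * a) := by rw [mul_assoc]
      _ = (a * b) * (a * (c * e)) := by rw [hcea]
      _ = ((a * b) * a) * (c * e) := (mul_assoc _ _ _).symm
      _ = (b * (a * b)) * (c * e) := by rw [h1]
      _ = b * ((a * b) * (c * e)) := by rw [mul_assoc]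
  have hdc : ((a * b) * (c * e)) * c = e * ((a * b) * (c * e)) := by
    have habe : (a * b) * e = e * (a * b) := by
      rw [mul_assoc, hbe, ← mul_assoc, hae, mul_assoc]
    calc ((a * b) * (c * e)) * c = (a * b) * ((c * e) * c) := by rw [mul_assoc]
      _ = (a * b) * (e * (c * e)) := by rw [h2]
      _ = ((a * b) * e) * (c * e) := (mul_assoc _ _ _).symm
      _ = (e * (a * b)) * (c * e) := by rw [habe]
      _ = e * ((a * b) * (c * e)) := by rw [mul_assoc]
  have hbe_pow : b ^ p = e ^ p := by
    have k1 := SemiconjBy.pow_right hda p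
    have k2 := SemiconjBy.pow_right hdc p
    rw [hz] at k1
    exact mul_right_cancel ((k1.symm).trans k2)
  have hcom_a_bp : a * b ^ p = b ^ p * a := by
    rw [hbe_pow]; exact (Commute.pow_right hae p)
  have hab : a ^ p = b ^ p := by
    have k1 := SemiconjBy.pow_right h1 p
    have k3 : (a * b) * b ^ p = b ^ p * (a * b) :=
      Commute.mul_left hcom_a_bp (Commute.self_pow b p)
    exact mul_left_cancel (k1.trans k3.symm)
  exact ⟨hab, hab.trans hbe_pow⟩

/-- If `G` is a smallest finite non-cyclic quotient of `B_n` (`n ≥ 5`) via `f`, `m` is the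
order of `f(σ₁)` and `p` is the minimal positive integer with `f(σ₁)^p = f(σ_{2i-1})^p` for all
`1 ≤ i ≤ ⌊n/2⌋`, then `p = m`. -/
theorem p_eq_m_for_smallest_quotient
    (n : ℕ) (hn : 5 ≤ n) (G : Type) [Group G] [Finite G] (hG : ¬ IsCyclic G)
    (f : BraidGroup n →* G) (hf : Function.Surjective f)
    (hminG : ∀ (G' : Type) [Group G'] [Finite G'], ¬ IsCyclic G' →
      (∃ f' : BraidGroup n →* G', Function.Surjective f') → Nat.card G ≤ Nat.card G')
    (m : ℕ) (hm : m = orderOf (f (braidGen ⟨0, by omega⟩)))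
    (p : ℕ) (hp : 0 < p)
    (hpow : ∀ i : ℕ, 1 ≤ i → i ≤ n / 2 → ∀ h : 2 * i - 2 < n - 1,
      f (braidGen ⟨0, by omega⟩) ^ p = f (braidGen ⟨2 * i - 2, h⟩) ^ p)
    (hpmin : ∀ q : ℕ, 0 < q →
      (∀ i : ℕ, 1 ≤ i → i ≤ n / 2 → ∀ h : 2 * i - 2 < n - 1,
        f (braidGen ⟨0, by omega⟩) ^ q = f (braidGen ⟨2 * i - 2, h⟩) ^ q) → p ≤ q) :
    p = m := by
  classical
  set g : ℕ → G := fun j => if h : j < n - 1 then f (braidGen ⟨j, h⟩) else 1 with hgdef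
  have hg : ∀ (j : ℕ) (h : j < n - 1), g j = f (braidGen ⟨j, h⟩) := by
    intro j h; simp only [hgdef, dif_pos h]
  have hrel : ∀ j : ℕ, j + 1 < n - 1 →
      g j * g (j + 1) * g j = g (j + 1) * g j * g (j + 1) := by
    intro j h
    have hj : j < n - 1 := by omega
    rw [hg j hj, hg (j+1) h, ← map_mul, ← map_mul, ← map_mul, ← map_mul]
    exact congrArg f (braid_braid ⟨j, hj⟩ ⟨j+1, h⟩ rfl)
  have hcom : ∀ j k : ℕ, j + 2 ≤ k → k < n - 1 → g j * g k = g k * g j := by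
    intro j k hjk hk
    have hj : j < n - 1 := by omega
    rw [hg j hj, hg k hk, ← map_mul, ← map_mul]
    exact congrArg f (braid_comm ⟨j, hj⟩ ⟨k, hk⟩ hjk)
  have h0 : (0 : ℕ) < n - 1 := by omega
  have h1 : (1 : ℕ) < n - 1 := by omega
  have h2 : (2 : ℕ) < n - 1 := by omega
  have h3 : (3 : ℕ) < n - 1 := by omega
  have hm0 : 0 < m := by rw [hm]; exact orderOf_pos _
  have horder : ∀ j : ℕ, j < n - 1 → g j ^ m = 1 := by
    intro j
    induction j with
    | zero =>
      intro h
      rw [hg 0 h, hm]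
      exact pow_orderOf_eq_one _
    | succ j ih =>
      intro h
      have hj : j < n - 1 := by omega
      have hsemi : (g j * g (j+1)) * g j = g (j+1) * (g j * g (j+1)) := by
        rw [← mul_assoc, hrel j h, mul_assoc]
      have k1 := SemiconjBy.pow_right hsemi m
      have k2 : (g j * g (j+1)) = g (j+1) ^ m * (g j * g (j+1)) := by
        calc (g j * g (j+1)) = (g j * g (j+1)) * g j ^ m := by rw [ih hj, mul_one]
          _ = g (j+1) ^ m * (g j * g (j+1)) := k1
      exact (mul_right_cancel ((one_mul (g j * g (j+1))).trans k2)).symm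
  -- p ≤ m
  have hpm : p ≤ m := by
    apply hpmin m hm0
    intro i hi1 hi2 hlt
    have e0 : f (braidGen (n := n) ⟨0, h0⟩) ^ m = 1 := by
      have := horder 0 h0; rwa [hg 0 h0] at this
    have e1 : f (braidGen (n := n) ⟨2 * i - 2, hlt⟩) ^ m = 1 := by
      have := horder _ hlt; rwa [hg _ hlt] at this
    exact e0.trans e1.symm
  rcases eq_or_lt_of_le hpm with heq | hlt
  · exact heq
  exfalso
  have hz02 : g 0 ^ p = g 2 ^ p := by
    have h4 : 2 * 2 - 2 < n - 1 := by omega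
    have key := hpow 2 (by norm_num) (by omega) h4
    have e : (⟨2 * 2 - 2, h4⟩ : Fin (n - 1)) = ⟨2, h2⟩ := Fin.ext (by norm_num)
    rw [e] at key
    rw [hg 0 h0, hg 2 h2]
    exact key
  obtain ⟨hz01, hz03⟩ := power_eq_aux (g 0) (g 1) (g 2) (g 3) p
    (hrel 0 h1) (hrel 2 h3)
    (hcom 0 2 (by norm_num) h2) (hcom 0 3 (by norm_num) h3) (hcom 1 3 (by norm_num) h3) hz02
  -- z := g 0 ^ p commutes with every generator
  have hzgen : ∀ j : ℕ, j < n - 1 → g 0 ^ p * g j = g j * g 0 ^ p := by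
    intro j hj
    rcases j with _ | j
    · exact (Commute.refl (g 0)).pow_left p
    rcases j with _ | j
    · rw [hz01]; exact (Commute.refl (g 1)).pow_left p
    rcases j with _ | j
    · rw [hz02]; exact (Commute.refl (g 2)).pow_left p
    rcases j with _ | j
    · rw [hz03]; exact (Commute.refl (g 3)).pow_left p
    rw [hz02]
    exact Commute.pow_left (hcom 2 (j+1+1+1+1) (by omega) (by omega)) p
  -- z is central
  have hzc : ∀ x : G, g 0 ^ p * x = x * g 0 ^ p := by
    intro x
    obtain ⟨w, rfl⟩ := hf x
    have hw : w ∈ (Subgroup.centralizer {g 0 ^ p}).comap f := by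
      apply braid_gen_induction
      intro i
      simp only [Subgroup.mem_comap]
      rw [Subgroup.mem_centralizer_iff]
      intro y hy
      rcases hy with rfl
      have e : f (braidGen i) = g i.1 := by rw [hg i.1 i.2]
      rw [e]
      exact hzgen i.1 i.2
    have hw2 := Subgroup.mem_comap.mp hw
    rw [Subgroup.mem_centralizer_iff] at hw2
    exact hw2 _ rfl
  have hzne : g 0 ^ p ≠ 1 := by
    intro hz1
    have hdvd : orderOf (g 0) ∣ p := orderOf_dvd_of_pow_eq_one hz1
    rw [hg 0 h0, ← hm] at hdvd
    exact absurd (Nat.le_of_dvd hp hdvd) (by omega)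
  set N : Subgroup G := Subgroup.zpowers (g 0 ^ p) with hN
  have hNcentral : ∀ u ∈ N, ∀ x : G, u * x = x * u := by
    intro u hu x
    obtain ⟨k, rfl⟩ := Subgroup.mem_zpowers_iff.mp hu
    exact Commute.zpow_left (hzc x) k
  haveI hNnormal : N.Normal := by
    constructor
    intro u hu x
    rw [← hNcentral u hu x, mul_assoc, mul_inv_cancel, mul_one]
    exact hu
  have hsurj' : Function.Surjective ((QuotientGroup.mk' N).comp f) :=
    (QuotientGroup.mk'_surjective N).comp hf
  have hcardlt : Nat.card (G ⧸ N) < Nat.card G := by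
    have hc := Subgroup.card_eq_card_quotient_mul_card_subgroup N
    have hq : 0 < Nat.card (G ⧸ N) := Nat.card_pos
    have hn2 : 1 < Nat.card N := by
      apply N.one_lt_card_iff_ne_bot.mpr
      intro hbot
      exact hzne ((Subgroup.mem_bot).mp (hbot ▸ Subgroup.mem_zpowers (g 0 ^ p)))
    calc Nat.card (G ⧸ N) < Nat.card (G ⧸ N) * Nat.card N :=
          lt_mul_of_one_lt_right hq hn2
      _ = Nat.card G := hc.symm
  have hcyc' : IsCyclic (G ⧸ N) := by
    by_contra hnc
    exact absurd (hminG (G ⧸ N) hnc ⟨(QuotientGroup.mk' N).comp f, hsurj'⟩) (by omega)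
  have hqcomm : ∀ x y : G ⧸ N, x * y = y * x := by
    intro x y
    obtain ⟨γ, hγ⟩ := hcyc'.exists_generator
    obtain ⟨k, hk⟩ := Subgroup.mem_zpowers_iff.mp (hγ x)
    obtain ⟨l, hl⟩ := Subgroup.mem_zpowers_iff.mp (hγ y)
    rw [← hk, ← hl]
    exact ((Commute.refl γ).zpow_right l).zpow_left k
  have hconj01 : (g 0 * g 1) * g 0 * (g 0 * g 1)⁻¹ = g 1 := by
    have hh : (g 0 * g 1) * g 0 = g 1 * (g 0 * g 1) := by
      rw [← mul_assoc, hrel 0 h1, mul_assoc]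
    rw [hh, mul_inv_cancel_right]
  have hmk01 : QuotientGroup.mk' N (g 0) = QuotientGroup.mk' N (g 1) := by
    have hA := congrArg (QuotientGroup.mk' N) hconj01
    simp only [map_mul, map_inv] at hA
    rw [hqcomm (QuotientGroup.mk' N (g 0) * QuotientGroup.mk' N (g 1))
      (QuotientGroup.mk' N (g 0)), mul_assoc, mul_inv_cancel, mul_one] at hA
    exact hA
  obtain ⟨u, huN, hu⟩ := (QuotientGroup.mk'_eq_mk' N).mp hmk01
  have hcomm01 : g 0 * g 1 = g 1 * g 0 := by
    rw [← hu, mul_assoc, ← hNcentral u huN (g 0)]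
  have heq01 : g 0 = g 1 := by
    have hb := hrel 0 h1
    rw [mul_assoc, ← hcomm01, ← mul_assoc] at hb
    have hb2 : g 0 * (g 0 * g 1) = g 1 * (g 0 * g 1) := by
      rw [← mul_assoc, ← mul_assoc, ← hcomm01]
      exact hb
    exact mul_right_cancel hb2
  have hall : ∀ j : ℕ, j < n - 1 → g j = g 0 := by
    intro j
    induction j using Nat.strong_induction_on with
    | _ j ih =>
      rcases j with _ | j
      · intro _; rfl
      rcases j with _ | j
      · intro _; exact heq01.symm
      intro hj
      have e1 : g j = g 0 := ih j (by omega) (by omega)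
      have e2 : g (j+1) = g 0 := ih (j+1) (by omega) (by omega)
      have hb := hrel (j+1) (by omega)
      rw [e2] at hb
      have hc := hcom j (j+1+1) (by omega) (by omega)
      rw [e1] at hc
      -- hb : g 0 * x * g 0 = x * g 0 * x,  hc : g 0 * x = x * g 0, x = g (j+1+1)
      rw [mul_assoc, ← hc, ← mul_assoc] at hb
      have hb2 : g 0 * (g 0 * g (j+1+1)) = g (j+1+1) * (g 0 * g (j+1+1)) := by
        rw [← mul_assoc, ← mul_assoc, ← hc]
        exact hb
      show g (j+1+1) = g 0
      exact (mul_right_cancel hb2).symm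
  apply hG
  constructor
  refine ⟨g 0, fun x => ?_⟩
  obtain ⟨w, rfl⟩ := hf x
  have hw : w ∈ (Subgroup.zpowers (g 0)).comap f := by
    apply braid_gen_induction
    intro i
    simp only [Subgroup.mem_comap]
    have e : f (braidGen i) = g i.1 := by rw [hg i.1 i.2]
    rw [e, hall i.1 i.2]
    exact Subgroup.mem_zpowers _
  exact Subgroup.mem_comap.mp hw
end

section
/- Let n ≥ 5, let f be a surjective group homomorphism from the braid group B_n onto a group G, and let p be a positive integer such that f(σ_1)^p = f(σ_3)^p. Then the cyclic subgroup of G generated by f(σ_1)^p is a normal subgroup of G. -/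
lemma braidRel_eq_one {m : ℕ} {r : FreeGroup (Fin m)} (h : r ∈ braidRels m) :
    PresentedGroup.mk (braidRels m) r = 1 :=
  (QuotientGroup.eq_one_iff r).mpr (Subgroup.subset_normalClosure h)

lemma braidGen_comm {n : ℕ} (i j : Fin (n - 1)) (h : (i : ℕ) + 2 ≤ (j : ℕ)) :
    braidGen (n := n) i * braidGen j = braidGen j * braidGen i := by
  have h1 := braidRel_eq_one (m := n - 1)
    (Or.inl ⟨i, j, h, rfl⟩ :
      FreeGroup.of i * FreeGroup.of j * (FreeGroup.of i)⁻¹ * (FreeGroup.of j)⁻¹ ∈ braidRels (n-1))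
  simp only [map_mul, map_inv] at h1
  have h2 : braidGen i * braidGen j * (braidGen i)⁻¹ = braidGen j := by
    have := mul_inv_eq_one.mp h1
    exact this
  exact mul_inv_eq_iff_eq_mul.mp h2

lemma braidGen_braid {n : ℕ} (i j : Fin (n - 1)) (h : (j : ℕ) = (i : ℕ) + 1) :
    braidGen (n := n) i * braidGen j * braidGen i = braidGen j * braidGen i * braidGen j := by
  have h1 := braidRel_eq_one (m := n - 1)
    (Or.inr ⟨i, j, h, rfl⟩ :
      FreeGroup.of i * FreeGroup.of j * FreeGroup.of i *
        (FreeGroup.of j * FreeGroup.of i * FreeGroup.of j)⁻¹ ∈ braidRels (n-1))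
  simp only [map_mul, map_inv] at h1
  have := mul_inv_eq_one.mp h1
  exact this

/-- For `n ≥ 5`, if `f : B_n → G` is surjective and `f(σ₁)^p = f(σ₃)^p` for some `p > 0`, then
the cyclic subgroup generated by `f(σ₁)^p` is normal in `G`. -/
theorem zpowers_normal_of_braid_quotient
    (n : ℕ) (hn : 5 ≤ n) {G : Type*} [Group G]
    (f : BraidGroup n →* G) (hf : Function.Surjective f)
    (p : ℕ) (hp : 0 < p)
    (h13 : f (braidGen ⟨0, by omega⟩) ^ p = f (braidGen ⟨2, by omega⟩) ^ p) :
    (Subgroup.zpowers (f (braidGen ⟨0, by omega⟩) ^ p)).Normal := by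
  have hm : 4 ≤ n - 1 := by omega
  set g : Fin (n - 1) → G := fun i => f (braidGen i) with hg
  set i0 : Fin (n - 1) := ⟨0, by omega⟩
  set i1 : Fin (n - 1) := ⟨1, by omega⟩
  set i2 : Fin (n - 1) := ⟨2, by omega⟩
  set i3 : Fin (n - 1) := ⟨3, by omega⟩
  have gcomm : ∀ i j : Fin (n - 1), (i : ℕ) + 2 ≤ (j : ℕ) → Commute (g i) (g j) := by
    intro i j h
    have := congrArg f (braidGen_comm i j h)
    simpa [hg, map_mul, Commute, SemiconjBy] using this
  set z : G := g i0 ^ p with hz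
  have h13' : z = g i2 ^ p := h13
  -- conjugation by g i2 * g i3 sends g i2 to g i3
  have hb : g i2 * g i3 * g i2 = g i3 * g i2 * g i3 := by
    have := congrArg f (braidGen_braid i2 i3 rfl)
    simpa [hg, map_mul] using this
  have conj23 : (g i2 * g i3) * g i2 * (g i2 * g i3)⁻¹ = g i3 :=
    mul_inv_eq_iff_eq_mul.mpr (by rw [← mul_assoc]; exact hb)
  -- g i0 commutes with g i2 * g i3
  have c02 : Commute (g i0) (g i2) := gcomm i0 i2 (by simp [i0, i2])
  have c03 : Commute (g i0) (g i3) := gcomm i0 i3 (by simp [i0, i3])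
  have cv : Commute ((g i2 * g i3)) z := ((c02.mul_right c03).symm.pow_right p)
  -- hence g i3 ^ p = z
  have h4 : g i3 ^ p = z := by
    calc g i3 ^ p = ((g i2 * g i3) * g i2 * (g i2 * g i3)⁻¹) ^ p := by rw [conj23]
      _ = (g i2 * g i3) * g i2 ^ p * (g i2 * g i3)⁻¹ := conj_pow
      _ = (g i2 * g i3) * z * (g i2 * g i3)⁻¹ := by rw [← h13']
      _ = z := by rw [cv.eq, mul_assoc, mul_inv_cancel, mul_one]
  -- z commutes with every generator
  have hzgen : ∀ i : Fin (n - 1), Commute (g i) z := by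
    intro i
    rcases lt_or_ge (i : ℕ) 2 with h | h
    · have h01 : (i : ℕ) = 0 ∨ (i : ℕ) = 1 := by omega
      rcases h01 with h0 | h1
      · have : i = i0 := Fin.ext h0
        rw [this, h13']
        exact c02.pow_right p
      · have : i = i1 := Fin.ext h1
        rw [this, ← h4]
        exact (gcomm i1 i3 (by simp [i1, i3])).pow_right p
    · rw [hz]
      exact (gcomm i0 i (by simpa [i0] using h)).symm.pow_right p
  -- z commutes with everything in G
  have hzall : ∀ y : G, Commute y z := by
    intro y
    obtain ⟨x, rfl⟩ := hf y
    have hx : x ∈ Subgroup.closure (Set.range (braidGen (n := n))) := by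
      have : Subgroup.closure (Set.range (braidGen (n := n))) = ⊤ :=
        PresentedGroup.closure_range_of (braidRels (n - 1))
      rw [this]; trivial
    refine Subgroup.closure_induction (fun y hy => ?_) (by simp) ?_ ?_ hx
    · obtain ⟨i, rfl⟩ := hy
      exact hzgen i
    · intro a b _ _ ha hb
      rw [map_mul]; exact ha.mul_left hb
    · intro a _ ha
      rw [map_inv]; exact ha.inv_left
  show (Subgroup.zpowers z).Normal
  constructor
  intro a ha y
  obtain ⟨k, rfl⟩ := Subgroup.mem_zpowers_iff.mp ha
  have heq : y * z ^ k * y⁻¹ = z ^ k := by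
    rw [((hzall y).zpow_right k).eq, mul_assoc, mul_inv_cancel, mul_one]
  rw [heq]
  exact Subgroup.zpow_mem _ (Subgroup.mem_zpowers z) k
end

section
/- For every n ≥ 1, the dihedral group of order 2n contains no totally symmetric subset with exactly 3 elements. -/
lemma exists_three_cycle' {G : Type*} [Group G] {a b c : G}
    (hab : a ≠ b) (hac : a ≠ c) (hbc : b ≠ c)
    (hS : IsTotallySymmetric ({a, b, c} : Set G)) :
    ∃ h : G, h * a = b * h ∧ h * b = c * h ∧ h * c = a * h := by
  classical
  have ha : a ∈ ({a,b,c} : Set G) := by simp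
  have hb : b ∈ ({a,b,c} : Set G) := by simp
  have hc : c ∈ ({a,b,c} : Set G) := by simp
  set S : Set G := {a,b,c} with hSdef
  let f : S → S := fun x => if (x : G) = a then ⟨b, hb⟩ else if (x : G) = b then ⟨c, hc⟩ else ⟨a, ha⟩
  let g : S → S := fun x => if (x : G) = a then ⟨c, hc⟩ else if (x : G) = b then ⟨a, ha⟩ else ⟨b, hb⟩
  have hmem : ∀ x : S, (x : G) = a ∨ (x : G) = b ∨ (x : G) = c := fun x => x.2
  have hfg : ∀ x, g (f x) = x := by
    intro x
    rcases hmem x with h | h | h <;>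
      (ext; simp [f, g, h, hab, hac, hbc, hab.symm, hac.symm, hbc.symm])
  have hgf : ∀ x, f (g x) = x := by
    intro x
    rcases hmem x with h | h | h <;>
      (ext; simp [f, g, h, hab, hac, hbc, hab.symm, hac.symm, hbc.symm])
  obtain ⟨h, hh⟩ := hS.2 ⟨f, g, hfg, hgf⟩
  have e1 := hh ⟨a, ha⟩
  have e2 := hh ⟨b, hb⟩
  have e3 := hh ⟨c, hc⟩
  simp only [Equiv.coe_fn_mk] at e1 e2 e3
  simp only [f] at e1 e2 e3
  simp only [if_true, hab.symm, hac.symm, hbc.symm, if_neg, ite_false, ite_true,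
    eq_self_iff_true] at e1 e2 e3
  refine ⟨h, ?_, ?_, ?_⟩
  · rw [← e1]; group
  · rw [← e2]; group
  · rw [← e3]; group


/-- The dihedral group of order `2n` has no totally symmetric subset with exactly three
elements. -/
theorem no_totallySymmetric_card_three_dihedral
    (n : ℕ) (hn : 1 ≤ n) (S : Set (DihedralGroup n)) (hS : IsTotallySymmetric S) :
    S.ncard ≠ 3 := by
  intro h3
  obtain ⟨a, b, c, hab, hac, hbc, rfl⟩ := Set.ncard_eq_three.mp h3
  obtain ⟨h, e1, e2, e3⟩ := exists_three_cycle' hab hac hbc hS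
  have hcomm : a * b = b * a := hS.1 a (by simp) b (by simp)
  rcases a with i | i <;> rcases b with j | j <;> rcases c with k | k <;>
    rcases h with t | t <;>
    simp only [DihedralGroup.r_mul_r, DihedralGroup.r_mul_sr, DihedralGroup.sr_mul_r,
      DihedralGroup.sr_mul_sr, DihedralGroup.r.injEq, DihedralGroup.sr.injEq,
      ne_eq, reduceCtorEq, not_false_eq_true] at e1 e2 e3 hcomm hab hac hbc ⊢
  · exact hab (by linear_combination e1)
  · exact hac (by linear_combination e1 - e2)
  · exact hac (by linear_combination -e1 + e2 - hcomm)
  · exact hac (by linear_combination e1 - e2)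
end
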